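/- arXiv:1908.08502 — 5 statements merged into one kernel-verified Lean document; each statement's English description precedes it below -/
import Mathlib

section
/- Let a be a weak composition and k a positive integer. Then ⋃ KD(b + e_j), taken over all weak compositions b ⪯ a and all 1 ≤ j ≤ k, equals ⋃ KD(supp_a^{(c,j)} + e_j), taken over all pairs (c, j) with 1 ≤ j ≤ k such that (c, j) is an addable cell for a. -/
attribute [local instance] Classical.propDecidable

/-- A diagram: a set of cells `(column, row)` with positive coordinates. -/
abbrev Diagram : Type := Set (ℕ × ℕ)

/-- The key diagram of a weak composition `a` (parts indexed from 1). -/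
def keyDiagram (a : ℕ → ℕ) : Diagram := {p | 1 ≤ p.1 ∧ 1 ≤ p.2 ∧ p.1 ≤ a p.2}

/-- A single Kohnert move: the rightmost cell of some row drops within its column to
the first unoccupied position below it. -/
def KohnertMove (T S : Diagram) : Prop :=
  ∃ c r r', (c, r) ∈ T ∧ (∀ c', (c', r) ∈ T → c' ≤ c) ∧
    1 ≤ r' ∧ r' < r ∧ (c, r') ∉ T ∧ (∀ s, r' < s → s < r → (c, s) ∈ T) ∧
    S = insert (c, r') (T \ {(c, r)})

/-- The set of Kohnert diagrams of a weak composition. -/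
def KD (a : ℕ → ℕ) : Set Diagram :=
  {T | Relation.ReflTransGen KohnertMove (keyDiagram a) T}

/-- Row weight: the number of cells in each row. -/
noncomputable def rowWeight (T : Diagram) : ℕ → ℕ :=
  fun r => {p : ℕ × ℕ | p ∈ T ∧ p.2 = r}.ncard

/-- Column weight: the number of cells in each column. -/
noncomputable def colWeight (T : Diagram) : ℕ → ℕ :=
  fun c => {p : ℕ × ℕ | p ∈ T ∧ p.1 = c}.ncard

/-- The weak composition with a single part `1` in position `j`. -/
def eComp (j : ℕ) : ℕ → ℕ := fun i => if i = j then 1 else 0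

/-- Exchange parts `i` and `j` of a weak composition. -/
def swapParts (a : ℕ → ℕ) (i j : ℕ) : ℕ → ℕ :=
  fun t => if t = i then a j else if t = j then a i else a t

/-- A single left swap: exchange two parts `a i < a j` with `i < j`. -/
def LSwapStep (a b : ℕ → ℕ) : Prop :=
  ∃ i j, 1 ≤ i ∧ i < j ∧ a i < a j ∧ b = swapParts a i j

/-- Left swap order: `b ⪯ a`. -/
def LswapLE (b a : ℕ → ℕ) : Prop := Relation.ReflTransGen LSwapStep a b

/-- A generic Kohnert diagram: a Kohnert diagram of some weak composition. -/
def GenericKD (T : Diagram) : Prop :=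
  ∃ a : ℕ → ℕ, (∃ n, ∀ i, n < i → a i = 0) ∧ T ∈ KD a

/-- The target space `D(a,k)`: union of `KD (b + e j)` over `b ⪯ a` and `1 ≤ j ≤ k`. -/
def Dset (a : ℕ → ℕ) (k : ℕ) : Set Diagram :=
  {T | ∃ b j, LswapLE b a ∧ 1 ≤ j ∧ j ≤ k ∧ T ∈ KD (b + eComp j)}

/-- `(c,r)` is an addable cell for `a`. -/
def Addable (a : ℕ → ℕ) (c r : ℕ) : Prop :=
  1 ≤ c ∧ 1 ≤ r ∧ a r < c ∧ ∃ s, r ≤ s ∧ a s = c - 1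

/-- `(c,r)` is a `k`-addable cell for `a`. -/
def KAddable (a : ℕ → ℕ) (k c r : ℕ) : Prop :=
  1 ≤ c ∧ 1 ≤ r ∧ r ≤ k ∧ a r < c ∧
    (a r < c - 1 → ∃ l, k < l ∧ a l = c - 1) ∧
    (∀ i, r < i → i ≤ k → a i < a r ∨ c ≤ a i)

/-- Apply the transpositions `t_{r0,r1} t_{r1,r2} ⋯` (rightmost first) to `a`. -/
def applyTranspositions (a : ℕ → ℕ) : List ℕ → (ℕ → ℕ)
  | [] => a
  | [_] => a
  | r0 :: r1 :: rest => swapParts (applyTranspositions a (r1 :: rest)) r0 r1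

/-- The increasing chain of row indices `r = r₀ < r₁ < ⋯ < r_q` used to construct
the maximal support composition for `a` at `(c,r)`: at each step, the next index is
the first position carrying the smallest part exceeding the current one and at most `c-1`. -/
noncomputable def suppChain (a : ℕ → ℕ) (c : ℕ) : ℕ → ℕ → List ℕ
  | 0, r => [r]
  | fuel + 1, r =>
    if (∃ s, r < s ∧ a r < a s ∧ a s ≤ c - 1) then
      r :: suppChain a c fuel (sInf {s | r < s ∧ a r < a s ∧ a s ≤ c - 1})
    else [r]

/-- The maximal support composition for `a` at `(c,r)`. -/
noncomputable def suppComp (a : ℕ → ℕ) (c r : ℕ) : ℕ → ℕ :=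
  applyTranspositions a (suppChain a c c r)

/-- The maximal drop composition for `a` in column `c` at the set of rows `R`. -/
noncomputable def dropComp (a : ℕ → ℕ) (c : ℕ) (R : Finset ℕ) : ℕ → ℕ :=
  applyTranspositions (suppComp a c (sSup (R : Set ℕ))) (R.sort (· ≤ ·))

/-- The key polynomial of a weak composition. -/
noncomputable def keyPoly (a : ℕ → ℕ) : MvPolynomial ℕ ℤ :=
  ∑ᶠ T ∈ KD a, ∏ᶠ i : ℕ, (MvPolynomial.X i : MvPolynomial ℕ ℤ) ^ rowWeight T i

/-- A matching sequence on a diagram `T`: edges `(x, y)` mean `x` (in column `i+1`)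
matches to `y` (in column `i`, weakly higher row); every cell outside column 1 is matched,
sources and targets are unique. -/
def IsMatchingSeq (T : Diagram) (M : Set ((ℕ × ℕ) × (ℕ × ℕ))) : Prop :=
  (∀ p ∈ M, p.1 ∈ T ∧ p.2 ∈ T ∧ 2 ≤ p.1.1 ∧ p.2.1 + 1 = p.1.1 ∧ p.1.2 ≤ p.2.2) ∧
  (∀ x y y' : ℕ × ℕ, (x, y) ∈ M → (x, y') ∈ M → y = y') ∧
  (∀ x x' y : ℕ × ℕ, (x, y) ∈ M → (x', y) ∈ M → x = x') ∧
  (∀ x ∈ T, 2 ≤ x.1 → ∃ y, (x, y) ∈ M)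

/-- The anchor weight of a matching sequence: its `i`-th part is the number of cells
on the path of `M` terminating at the column-1 cell in row `i`. -/
noncomputable def anchorWeight (T : Diagram) (M : Set ((ℕ × ℕ) × (ℕ × ℕ))) : ℕ → ℕ :=
  fun i =>
    {x : ℕ × ℕ | x ∈ T ∧ Relation.ReflTransGen (fun u v => (u, v) ∈ M) x (1, i)}.ncard

/-- `m_T(c,r)`. -/
noncomputable def mval (T : Diagram) (c r : ℕ) : ℤ :=
  ({p : ℕ × ℕ | p ∈ T ∧ p.1 = c - 1 ∧ r ≤ p.2}.ncard : ℤ) -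
    ({p : ℕ × ℕ | p ∈ T ∧ p.1 = c ∧ r ≤ p.2}.ncard : ℤ)

/-- One rectification step. -/
noncomputable def rho (T : Diagram) : Diagram :=
  if ∀ c r, 1 < c → 1 ≤ r → 0 ≤ mval T c r then T
  else
    let c := sInf {c | 1 < c ∧ ∃ r, 1 ≤ r ∧ mval T c r < 0}
    let r := sSup {r | 1 ≤ r ∧ ∀ r', 1 ≤ r' → mval T c r ≤ mval T c r'}
    insert (c - 1, r) (T \ {(c, r)})

/-- Rectification: iterate `rho` until it stabilizes. -/
noncomputable def rectify (T : Diagram) : Diagram :=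
  if h : ∃ m, rho^[m + 1] T = rho^[m] T then rho^[h.choose] T else T

/-- Bottom insertion `Δ₁`: add a cell at the leftmost empty position of row 1. -/
noncomputable def bottomInsert (T : Diagram) : Diagram :=
  insert (sInf {i | 1 ≤ i ∧ (i, 1) ∉ T}, 1) T

/-- Top insertion `Δ∞`: add a cell in row `j` beyond the last occupied column
and rectify. -/
noncomputable def topInsert (T : Diagram) (j : ℕ) : Diagram :=
  rectify (insert (sSup {c | ∃ r, (c, r) ∈ T} + 1, j) T)

/-- `x` is a removable cell of `T`. -/
def Removable (T : Diagram) (x : ℕ × ℕ) : Prop := x ∈ T ∧ GenericKD (T \ {x})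

/-- A weak Kohnert diagram: a diagram with a removable cell. -/
def WeakKD (T : Diagram) : Prop := ∃ x, Removable T x

/-- `c` is a removable column of `T`. -/
def IsRemovableCol (T : Diagram) (c : ℕ) : Prop := ∃ x, Removable T x ∧ x.1 = c

/-- The cells of the thread of `S` starting at the cell in column `j` and row `r`. -/
noncomputable def threadCells (S : Diagram) : ℕ → ℕ → Diagram
  | 0, _ => ∅
  | j + 1, r =>
    insert (j + 1, r)
      (if (∃ s, r ≤ s ∧ (j, s) ∈ S) then
        threadCells S j (sInf {s | r ≤ s ∧ (j, s) ∈ S})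
      else ∅)

/-- Extract the first thread of `S`: start at the lowest cell of the rightmost column. -/
noncomputable def extractThread (S : Diagram) : Diagram :=
  threadCells S (sSup {c | ∃ r, (c, r) ∈ S})
    (sInf {r | (sSup {c | ∃ r', (c, r') ∈ S}, r) ∈ S})

/-- The list of threads of the thread decomposition (with fuel). -/
noncomputable def threadList : ℕ → Diagram → List Diagram
  | 0, _ => []
  | fuel + 1, S =>
    if S = ∅ then [] else extractThread S :: threadList fuel (S \ extractThread S)

/-- The thread weight `θ(T)`: its `i`-th part is the number of cells of the thread
whose column-1 cell lies in row `i`. -/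
noncomputable def threadWeight (T : Diagram) : ℕ → ℕ :=
  fun i => ∑ᶠ th ∈ {th : Diagram | th ∈ threadList T.ncard T ∧ (1, i) ∈ th}, th.ncard

/-- The target space `D^(m)(a,k)`. -/
def DsetM (a : ℕ → ℕ) (k m : ℕ) : Set Diagram :=
  {T | ∃ (bs : ℕ → ℕ → ℕ) (js : ℕ → ℕ),
      LswapLE (bs 0) a ∧
      (∀ i, 1 ≤ i → i ≤ m → 1 ≤ js i ∧ js i ≤ k ∧
        LswapLE (bs i) (bs (i - 1) + eComp (js i))) ∧
      (∀ i i', 1 ≤ i → i < i' → i' ≤ m → bs i (js i) ≠ bs i' (js i')) ∧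
      T ∈ KD (bs m)}

/-- The sum of all monomials of degree `m` in `x_1, …, x_k`. -/
noncomputable def hPoly (k m : ℕ) : MvPolynomial ℕ ℤ :=
  ∑ s ∈ (Finset.Icc 1 k).sym m, (Multiset.map MvPolynomial.X s.val).prod

/-- Semistandard Young tableaux of shape `lam` with entries in `{1, …, n}`,
encoded as `f row col = entry` (0 outside the shape, rows/columns indexed from 1). -/
def IsSSYT (n : ℕ) (lam : ℕ → ℕ) (f : ℕ → ℕ → ℕ) : Prop :=
  (∀ i c, f i c ≠ 0 ↔ (1 ≤ i ∧ 1 ≤ c ∧ c ≤ lam i)) ∧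
  (∀ i c, f i c ≤ n) ∧
  (∀ i c, 1 ≤ i → 1 ≤ c → c + 1 ≤ lam i → f i c ≤ f i (c + 1)) ∧
  (∀ i c, 1 ≤ i → 1 ≤ c → c ≤ lam (i + 1) → f i c < f (i + 1) c)

/-- The column of row `i` at which `x` is inserted by RSK row insertion. -/
noncomputable def bumpCol (f : ℕ → ℕ → ℕ) (i x : ℕ) : ℕ :=
  sInf {c | 1 ≤ c ∧ (f i c = 0 ∨ x < f i c)}

/-- RSK row insertion, with fuel. -/
noncomputable def rskAux : ℕ → (ℕ → ℕ → ℕ) → ℕ → ℕ → (ℕ → ℕ → ℕ)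
  | 0, f, _, _ => f
  | fuel + 1, f, i, x =>
    let c := bumpCol f i x
    let y := f i c
    let f' : ℕ → ℕ → ℕ := fun i' c' => if i' = i ∧ c' = c then x else f i' c'
    if y = 0 then f' else rskAux fuel f' (i + 1) y

/-- RSK row insertion of the entry `x` into a tableau with entries at most `n`. -/
noncomputable def RSKinsert (n : ℕ) (f : ℕ → ℕ → ℕ) (x : ℕ) : ℕ → ℕ → ℕ :=
  rskAux (n + 1) f 1 x

/-- The map `𝔻`: the tableau cell in column `c` with entry `v` becomes the diagram
cell `(c, n + 1 - v)`. -/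
def toDiagram (n : ℕ) (f : ℕ → ℕ → ℕ) : Diagram :=
  {p | ∃ i, 1 ≤ i ∧ f i p.1 ≠ 0 ∧ p.2 + f i p.1 = n + 1}

/-!
`KD` is monotone for the left swap order: a left swap of the key diagram is realised by Kohnert
moves, dropping the overhanging cells of the longer row one column at a time. This gives `⊇`,
since the maximal support composition arises from `a` by left swaps along its chain.

For `⊆`, the left swap order is characterised by dominance of the counts
`#{0 < s ≤ m | t ≤ x s}` (with equality for large `m`). Given `b ⪯ a` and `j`, put
`c = b j + 1` and let `r` be one past the last `m < j` at which `a` and `b` have equally many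
parts `≥ c` among their first `m`. Then `(c, r)` is addable, and counting along the chain of
`supp_a^{(c,r)}` shows that `b + e_j` dominates `supp_a^{(c,r)} + e_r`.
-/

open Finset

noncomputable def countGE (x : ℕ → ℕ) (t m : ℕ) : ℤ :=
  ∑ s ∈ Ioc 0 m, if t ≤ x s then 1 else 0

lemma countGE_zero (x : ℕ → ℕ) (t : ℕ) : countGE x t 0 = 0 := by
  simp [countGE]

lemma countGE_succ (x : ℕ → ℕ) (t m : ℕ) :
    countGE x t (m + 1) = countGE x t m + if t ≤ x (m + 1) then 1 else 0 :=
  sum_Ioc_succ_top (Nat.zero_le m) _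

lemma countGE_sub (x : ℕ → ℕ) (t : ℕ) {p m : ℕ} (h : p ≤ m) :
    countGE x t m - countGE x t p = ∑ s ∈ Ioc p m, if t ≤ x s then 1 else 0 := by
  rw [countGE, countGE, ← sum_Ioc_consecutive _ (Nat.zero_le p) h]
  ring

lemma countGE_congr {x y : ℕ → ℕ} (t m : ℕ) (h : ∀ s ∈ Ioc 0 m, x s = y s) :
    countGE x t m = countGE y t m :=
  sum_congr rfl fun s hs => by rw [h s hs]

lemma countGE_sub_eq_of_gap {x : ℕ → ℕ} {t u p m : ℕ} (hpm : p ≤ m) (htu : t ≤ u)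
    (hgap : ∀ s ∈ Ioc p m, t ≤ x s → u ≤ x s) :
    countGE x t m - countGE x t p = countGE x u m - countGE x u p := by
  rw [countGE_sub x t hpm, countGE_sub x u hpm]
  refine sum_congr rfl fun s hs => ?_
  have := hgap s hs
  split_ifs <;> omega

lemma countGE_sub_le {x : ℕ → ℕ} {t u : ℕ} (htu : t ≤ u) {p m : ℕ} (hpm : p ≤ m) :
    countGE x u m - countGE x u p ≤ countGE x t m - countGE x t p := by
  rw [countGE_sub x t hpm, countGE_sub x u hpm]
  exact sum_le_sum fun s _ => by split_ifs <;> omega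

lemma countGE_sub_add_one_le {x : ℕ → ℕ} {t u p m j : ℕ} (hj : j ∈ Ioc p m)
    (htj : t ≤ x j) (hju : x j < u) :
    countGE x u m - countGE x u p + 1 ≤ countGE x t m - countGE x t p := by
  have hpm : p ≤ m := by rw [mem_Ioc] at hj; omega
  have key : ∑ s ∈ Ioc p m, ((if u ≤ x s then (1 : ℤ) else 0) + if j = s then 1 else 0)
      ≤ ∑ s ∈ Ioc p m, if t ≤ x s then 1 else 0 := by
    refine sum_le_sum fun s _ => ?_
    rcases eq_or_ne j s with rfl | hs
    · simp [htj, not_le.2 hju]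
    · simp only [if_neg hs, add_zero]
      split_ifs <;> omega
  rwa [sum_add_distrib, sum_ite_eq, if_pos hj, ← countGE_sub x u hpm, ← countGE_sub x t hpm] at key

lemma countGE_ext {x y : ℕ → ℕ} {m : ℕ} (h : ∀ t, countGE x t m = countGE y t m)
    (h' : ∀ t, countGE x t (m + 1) = countGE y t (m + 1)) : x (m + 1) = y (m + 1) := by
  have step : ∀ t, (if t ≤ x (m + 1) then (1 : ℤ) else 0) = if t ≤ y (m + 1) then 1 else 0 :=
    fun t => by simpa only [countGE_succ, h t, add_right_inj] using h' t
  have h1 := step (x (m + 1))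
  have h2 := step (y (m + 1))
  split_ifs at h1 h2 <;> omega

lemma swapParts_apply_left (a : ℕ → ℕ) (i j : ℕ) : swapParts a i j i = a j := by
  simp [swapParts]

lemma swapParts_apply_right (a : ℕ → ℕ) {i j : ℕ} (hij : i ≠ j) : swapParts a i j j = a i := by
  simp [swapParts, hij.symm]

lemma swapParts_apply_of_ne (a : ℕ → ℕ) {i j s : ℕ} (hi : s ≠ i) (hj : s ≠ j) :
    swapParts a i j s = a s := by
  simp [swapParts, hi, hj]

lemma countGE_swapParts {x : ℕ → ℕ} {i i' : ℕ} (hi : 0 < i) (hii' : i < i') (hx : x i ≤ x i')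
    (t m : ℕ) :
    countGE (swapParts x i i') t m
      = countGE x t m + if i ≤ m ∧ m < i' ∧ x i < t ∧ t ≤ x i' then 1 else 0 := by
  set δ : ℤ := if x i < t ∧ t ≤ x i' then 1 else 0
  have key : ∀ s, (if t ≤ swapParts x i i' s then (1 : ℤ) else 0)
      = (if t ≤ x s then 1 else 0) + ((if i = s then δ else 0) - if i' = s then δ else 0) := by
    intro s
    rcases eq_or_ne i s with rfl | hs
    · rw [swapParts_apply_left, if_pos rfl, if_neg hii'.ne']
      split_ifs <;> omega
    rcases eq_or_ne i' s with rfl | hs'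
    · rw [swapParts_apply_right x hii'.ne, if_neg hs, if_pos rfl]
      split_ifs <;> omega
    · rw [swapParts_apply_of_ne x (Ne.symm hs) (Ne.symm hs'), if_neg hs, if_neg hs']
      ring
  rw [countGE, sum_congr rfl fun s _ => key s, sum_add_distrib, sum_sub_distrib,
    sum_ite_eq, sum_ite_eq, ← countGE]
  simp only [mem_Ioc, δ]
  split_ifs <;> omega

lemma countGE_add_eComp {x : ℕ → ℕ} {j : ℕ} (hj : 0 < j) (t m : ℕ) :
    countGE (x + eComp j) t m = countGE x t m + if j ≤ m ∧ t = x j + 1 then 1 else 0 := by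
  have key : ∀ s, (if t ≤ (x + eComp j) s then (1 : ℤ) else 0)
      = (if t ≤ x s then 1 else 0) + if j = s then (if t = x j + 1 then 1 else 0) else 0 := by
    intro s
    rcases eq_or_ne j s with rfl | hs
    · simp only [Pi.add_apply, eComp]
      split_ifs <;> omega
    · simp [eComp, Ne.symm hs, hs]
  rw [countGE, sum_congr rfl fun s _ => key s, sum_add_distrib, sum_ite_eq, ← countGE]
  simp only [mem_Ioc]
  split_ifs <;> omega

/-- Rows are indexed from 1, so position 0 is never touched by a left swap. -/
structure Dominates (b a : ℕ → ℕ) (M : ℕ) : Prop where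
  zero_eq : b 0 = a 0
  countGE_le : ∀ t m, countGE a t m ≤ countGE b t m
  countGE_eq : ∀ t m, M ≤ m → countGE a t m = countGE b t m

lemma Dominates.lswapStep {b a b' : ℕ → ℕ} {M : ℕ} (h : Dominates b a M) (hs : LSwapStep b b') :
    ∃ M', Dominates b' a M' := by
  obtain ⟨i, i', hi, hii', hlt, rfl⟩ := hs
  refine ⟨max M i', ?_, fun t m => ?_, fun t m hm => ?_⟩
  · rw [swapParts_apply_of_ne b (by omega) (by omega), h.zero_eq]
  · rw [countGE_swapParts hi hii' hlt.le]
    have := h.countGE_le t m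
    split_ifs <;> omega
  · rw [countGE_swapParts hi hii' hlt.le, if_neg (by omega), add_zero]
    exact h.countGE_eq t m (le_of_max_le_left hm)

lemma LswapLE.exists_dominates {b a : ℕ → ℕ} (h : LswapLE b a) : ∃ M, Dominates b a M := by
  induction h with
  | refl => exact ⟨0, rfl, fun _ _ => le_rfl, fun _ _ _ => rfl⟩
  | tail _ hstep ih =>
    obtain ⟨M, hM⟩ := ih
    exact hM.lswapStep hstep

lemma countGE_sub_countGE_of_eqOn {x y : ℕ → ℕ} {r : ℕ} (hr : 0 < r)
    (h : ∀ s < r, x s = y s) (t : ℕ) :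
    countGE x t r - countGE y t r = (if t ≤ x r then 1 else 0) - if t ≤ y r then 1 else 0 := by
  obtain ⟨p, rfl⟩ : ∃ p, r = p + 1 := ⟨r - 1, by omega⟩
  rw [countGE_succ, countGE_succ,
    countGE_congr t p fun s hs => h s (by rw [mem_Ioc] at hs; omega)]
  ring

lemma Dominates.swapParts_of_first_diff {b a : ℕ → ℕ} {M r i' : ℕ} (h : Dominates b a M)
    (hr : 0 < r) (hpre : ∀ s < r, a s = b s) (hri' : r < i') (hi'M : i' ≤ M) (hlt : a r < a i')
    (hib : a i' ≤ b r) (hgap : ∀ s, r < s → s < i' → ¬(a r < a s ∧ a s ≤ b r)) :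
    Dominates b (swapParts a r i') M where
  zero_eq := by rw [swapParts_apply_of_ne a (by omega) (by omega), h.zero_eq]
  countGE_le t m := by
    rw [countGE_swapParts hr hri' hlt.le]
    split_ifs with hind
    · obtain ⟨hrm, hmi', hat, hti'⟩ := hind
      -- by the choice of `i'`, a part of `a` after `r` that reaches `t` already exceeds `b r`
      have hsame : countGE a t m - countGE a t r
          = countGE a (b r + 1) m - countGE a (b r + 1) r :=
        countGE_sub_eq_of_gap hrm (by omega) fun s hs hts => by
          rw [mem_Ioc] at hs
          have := hgap s hs.1 (by omega)
          omega
      have hb := countGE_sub_le (x := b) (show t ≤ b r + 1 by omega) hrm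
      have hdom := h.countGE_le (b r + 1) m
      have hpre_t := countGE_sub_countGE_of_eqOn hr hpre t
      have hpre_top := countGE_sub_countGE_of_eqOn hr hpre (b r + 1)
      split_ifs at hpre_t hpre_top <;> omega
    · simpa using h.countGE_le t m
  countGE_eq t m hm := by
    rw [countGE_swapParts hr hri' hlt.le, if_neg (by omega), add_zero]
    exact h.countGE_eq t m hm

lemma Dominates.exists_swap {b a : ℕ → ℕ} {M : ℕ} (h : Dominates b a M) (hne : a ≠ b) :
    ∃ r i', 0 < r ∧ r < i' ∧ i' ≤ M ∧ a r < a i' ∧ a i' ≤ b r ∧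
      Dominates b (swapParts a r i') M := by
  have hdiff : ∃ s, a s ≠ b s := Function.ne_iff.1 hne
  obtain ⟨r, hne_r, hpre⟩ : ∃ r, a r ≠ b r ∧ ∀ s < r, a s = b s :=
    ⟨Nat.find hdiff, Nat.find_spec hdiff, fun s hs => not_not.1 (Nat.find_min hdiff hs)⟩
  have hr0 : r ≠ 0 := fun h0 => hne_r (h0 ▸ h.zero_eq.symm)
  obtain ⟨p, rfl⟩ : ∃ p, r = p + 1 := ⟨r - 1, by omega⟩
  have hr : 0 < p + 1 := by omega
  have hdiff_r := countGE_sub_countGE_of_eqOn hr hpre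
  have hab : a (p + 1) < b (p + 1) := by
    have hd := hdiff_r (a (p + 1))
    have hle := h.countGE_le (a (p + 1)) (p + 1)
    split_ifs at hd <;> omega
  have hpM : p < M := by
    by_contra! hMp
    exact hne_r <| countGE_ext (fun t => h.countGE_eq t p hMp)
      fun t => h.countGE_eq t (p + 1) (by omega)
  obtain ⟨s₀, hs₀M, hps₀, has₀⟩ : ∃ s ≤ M, p + 1 < s ∧ a s = b (p + 1) := by
    by_contra! hnone
    have ha := countGE_sub_eq_of_gap (x := a) (show p + 1 ≤ M by omega)
      (Nat.le_add_right (b (p + 1)) 1)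
      fun s hs hs' => by
        rw [mem_Ioc] at hs
        have := hnone s hs.2 hs.1
        omega
    have hb := countGE_sub_le (x := b) (Nat.le_add_right (b (p + 1)) 1) (show p + 1 ≤ M by omega)
    have hd := hdiff_r (b (p + 1))
    have hd' := hdiff_r (b (p + 1) + 1)
    have hM := h.countGE_eq (b (p + 1)) M le_rfl
    have hM' := h.countGE_eq (b (p + 1) + 1) M le_rfl
    split_ifs at hd hd' <;> omega
  have hocc : ∃ s, p + 1 < s ∧ a (p + 1) < a s ∧ a s ≤ b (p + 1) := ⟨s₀, hps₀, by omega, by omega⟩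
  obtain ⟨hri', hlt, hib⟩ := Nat.find_spec hocc
  have hi'M : Nat.find hocc ≤ M := (Nat.find_min' hocc ⟨hps₀, by omega, by omega⟩).trans hs₀M
  exact ⟨p + 1, Nat.find hocc, hr, hri', hi'M, hlt, hib,
    h.swapParts_of_first_diff hr hpre hri' hi'M hlt hib
      fun s hrs hs hs' => Nat.find_min hocc hs ⟨hrs, hs'⟩⟩

noncomputable def dominanceGap (b a : ℕ → ℕ) (M T : ℕ) : ℤ :=
  ∑ m ∈ Ioc 0 M, ∑ t ∈ Ioc 0 T, (countGE b t m - countGE a t m)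

lemma Dominates.dominanceGap_nonneg {b a : ℕ → ℕ} {M : ℕ} (h : Dominates b a M) (T : ℕ) :
    0 ≤ dominanceGap b a M T :=
  sum_nonneg fun m _ => sum_nonneg fun t _ => sub_nonneg.2 (h.countGE_le t m)

lemma dominanceGap_swapParts_lt {b a : ℕ → ℕ} {M T r i' : ℕ} (hr : 0 < r) (hri' : r < i')
    (hrM : r ≤ M) (hlt : a r < a i') (hT : a i' ≤ T) :
    dominanceGap b (swapParts a r i') M T < dominanceGap b a M T := by
  have hswap := countGE_swapParts hr hri' hlt.le
  refine sum_lt_sum (fun m _ => sum_le_sum fun t _ => ?_) ⟨r, mem_Ioc.2 ⟨hr, hrM⟩, ?_⟩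
  · rw [hswap]
    split_ifs <;> omega
  · refine sum_lt_sum (fun t _ => ?_) ⟨a i', mem_Ioc.2 ⟨by omega, hT⟩, ?_⟩
    · rw [hswap]
      split_ifs <;> omega
    · rw [hswap, if_pos ⟨le_rfl, hri', hlt, le_rfl⟩]
      omega

lemma Dominates.lswapLE {b a : ℕ → ℕ} {M : ℕ} (h : Dominates b a M) : LswapLE b a := by
  set T := (range (M + 1)).sup b
  have hT : ∀ s ≤ M, b s ≤ T := fun s hs => le_sup (mem_range.2 (Nat.lt_succ_of_le hs))
  -- each exchange step strictly decreases the nonnegative `dominanceGap b · M T`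
  suffices ∀ N a, Dominates b a M → (dominanceGap b a M T).toNat = N →
      Relation.ReflTransGen LSwapStep a b from this _ a h rfl
  intro N
  induction N using Nat.strong_induction_on with
  | _ N ih =>
    intro a h hN
    by_cases hab : a = b
    · exact hab ▸ Relation.ReflTransGen.refl
    obtain ⟨r, i', hr, hri', hi'M, hlt, hib, h'⟩ := h.exists_swap hab
    have hgap := dominanceGap_swapParts_lt (b := b) hr hri' (hri'.le.trans hi'M) hlt
      (hib.trans (hT r (by omega)))
    refine .head ⟨r, i', hr, hri', hlt, rfl⟩ (ih _ ?_ _ h' rfl)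
    have := h'.dominanceGap_nonneg T
    omega

/-- The cell drops through each empty position of column `c` between rows `r` and `i` in turn;
the hypothesis on the rows in between keeps it the rightmost cell of its row each time. -/
lemma kohnertMove_reflTransGen_drop {c i r : ℕ} {T : Diagram} (hi : 1 ≤ i) (hir : i < r)
    (hcr : (c, r) ∈ T) (hright : ∀ c', (c', r) ∈ T → c' ≤ c) (hci : (c, i) ∉ T)
    (hrows : ∀ s, i < s → s < r → (c, s) ∉ T → ∀ c', (c', s) ∈ T → c' < c) :
    Relation.ReflTransGen KohnertMove T (insert (c, i) (T \ {(c, r)})) := by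
  induction r using Nat.strong_induction_on generalizing T with
  | _ r ih =>
    set r' := Nat.findGreatest (fun s => i ≤ s ∧ (c, s) ∉ T) (r - 1)
    obtain ⟨hir', hcr'⟩ : i ≤ r' ∧ (c, r') ∉ T :=
      Nat.findGreatest_spec (P := fun s => i ≤ s ∧ (c, s) ∉ T) (by omega) ⟨le_rfl, hci⟩
    have hr'r : r' ≤ r - 1 := Nat.findGreatest_le _
    have hmove : KohnertMove T (insert (c, r') (T \ {(c, r)})) := by
      refine ⟨c, r, r', hcr, hright, by omega, by omega, hcr', fun s hs hs' => ?_, rfl⟩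
      by_contra hcs
      exact Nat.findGreatest_is_greatest hs (by omega) ⟨by omega, hcs⟩
    rcases hir'.eq_or_lt with heq | hir'
    · rw [heq]
      exact .single hmove
    set T' := insert (c, r') (T \ {(c, r)})
    have hrest : insert (c, i) (T' \ {(c, r')}) = insert (c, i) (T \ {(c, r)}) := by
      rw [Set.insert_sdiff_self_of_notMem fun h => hcr' h.1]
    rw [← hrest]
    refine .head hmove (ih r' (by omega) hir' (Set.mem_insert _ _) ?_ ?_ ?_)
    · simp only [T', Set.mem_insert_iff, Set.mem_sdiff, Prod.mk.injEq]
      rintro c' (⟨rfl, -⟩ | ⟨hc', -⟩)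
      · exact le_rfl
      · exact (hrows r' hir' (by omega) hcr' c' hc').le
    · simp only [T', Set.mem_insert_iff, Set.mem_sdiff, Prod.mk.injEq, not_or]
      exact ⟨by omega, fun h => hci h.1⟩
    · simp only [T', Set.mem_insert_iff, Set.mem_sdiff, Set.mem_singleton_iff, Prod.mk.injEq,
        not_or, not_and]
      rintro s his hsr' ⟨-, hcs⟩ c' (⟨-, rfl⟩ | ⟨hc', -⟩)
      · omega
      · exact hrows s his (by omega) (fun h => hcs h (by omega)) c' hc'

def partialSwapDiagram (a : ℕ → ℕ) (i i' k : ℕ) : Diagram :=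
  {p | (p ∈ keyDiagram a ∧ ¬(p.2 = i' ∧ k < p.1)) ∨ (p.2 = i ∧ k < p.1 ∧ p.1 ≤ a i')}

lemma mem_keyDiagram {a : ℕ → ℕ} {x y : ℕ} :
    (x, y) ∈ keyDiagram a ↔ 1 ≤ x ∧ 1 ≤ y ∧ x ≤ a y := Iff.rfl

lemma mem_partialSwapDiagram {a : ℕ → ℕ} {i i' k x y : ℕ} :
    (x, y) ∈ partialSwapDiagram a i i' k ↔
      ((1 ≤ x ∧ 1 ≤ y ∧ x ≤ a y) ∧ ¬(y = i' ∧ k < x)) ∨ (y = i ∧ k < x ∧ x ≤ a i') := Iff.rfl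

lemma partialSwapDiagram_self (a : ℕ → ℕ) (i i' : ℕ) :
    partialSwapDiagram a i i' (a i') = keyDiagram a := by
  ext ⟨x, y⟩
  rw [mem_partialSwapDiagram, mem_keyDiagram]
  rcases eq_or_ne y i' with rfl | hyi'
  · omega
  · omega

lemma partialSwapDiagram_eq_keyDiagram_swapParts (a : ℕ → ℕ) {i i' : ℕ} (hi : 1 ≤ i)
    (hii' : i < i') (hlt : a i < a i') :
    partialSwapDiagram a i i' (a i) = keyDiagram (swapParts a i i') := by
  ext ⟨x, y⟩
  rw [mem_partialSwapDiagram, mem_keyDiagram]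
  rcases eq_or_ne y i with rfl | hyi
  · rw [swapParts_apply_left]
    omega
  rcases eq_or_ne y i' with rfl | hyi'
  · rw [swapParts_apply_right a hii'.ne]
    omega
  · rw [swapParts_apply_of_ne a hyi hyi']
    omega

lemma partialSwapDiagram_reflTransGen_pred (a : ℕ → ℕ) {i i' k : ℕ} (hi : 1 ≤ i)
    (hii' : i < i') (hik : a i ≤ k) (hki' : k < a i') :
    Relation.ReflTransGen KohnertMove (partialSwapDiagram a i i' (k + 1))
      (partialSwapDiagram a i i' k) := by
  have hdrop := kohnertMove_reflTransGen_drop (c := k + 1)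
    (T := partialSwapDiagram a i i' (k + 1)) hi hii' (by rw [mem_partialSwapDiagram]; omega)
    (fun c' hc' => by rw [mem_partialSwapDiagram] at hc'; omega)
    (by rw [mem_partialSwapDiagram]; omega)
    (fun s _ _ hs c' hc' => by rw [mem_partialSwapDiagram] at hs hc'; omega)
  convert hdrop using 1
  ext ⟨x, y⟩
  simp only [Set.mem_insert_iff, Set.mem_sdiff, Set.mem_singleton_iff, Prod.mk.injEq,
    mem_partialSwapDiagram]
  omega

lemma keyDiagram_reflTransGen_swapParts (a : ℕ → ℕ) {i i' : ℕ} (hi : 1 ≤ i) (hii' : i < i')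
    (hlt : a i < a i') :
    Relation.ReflTransGen KohnertMove (keyDiagram a) (keyDiagram (swapParts a i i')) := by
  have hmoved : ∀ n ≤ a i' - a i,
      Relation.ReflTransGen KohnertMove (keyDiagram a) (partialSwapDiagram a i i' (a i' - n)) := by
    intro n
    induction n with
    | zero => exact fun _ => by rw [Nat.sub_zero, partialSwapDiagram_self a i i']
    | succ n ih =>
      intro hn
      have hstep := partialSwapDiagram_reflTransGen_pred a hi hii'
        (k := a i' - (n + 1)) (by omega) (by omega)
      rw [show a i' - (n + 1) + 1 = a i' - n by omega] at hstep
      exact (ih (by omega)).trans hstep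
  have := hmoved (a i' - a i) le_rfl
  rwa [Nat.sub_sub_self hlt.le, partialSwapDiagram_eq_keyDiagram_swapParts a hi hii' hlt] at this

lemma KD_subset_of_lswapLE {b a : ℕ → ℕ} (h : LswapLE b a) : KD b ⊆ KD a := by
  induction h with
  | refl => exact le_rfl
  | tail _ hstep ih =>
    obtain ⟨i, i', hi, hii', hlt, rfl⟩ := hstep
    exact fun T hT => ih ((keyDiagram_reflTransGen_swapParts _ hi hii' hlt).trans hT)

lemma applyTranspositions_of_notMem (a : ℕ → ℕ) :
    ∀ (L : List ℕ) (s : ℕ), s ∉ L → applyTranspositions a L s = a s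
  | [], _, _ => rfl
  | [_], _, _ => rfl
  | r₀ :: r₁ :: rest, s, h => by
    simp only [List.mem_cons, not_or] at h
    rw [applyTranspositions, swapParts_apply_of_ne _ h.1 h.2.1,
      applyTranspositions_of_notMem a (r₁ :: rest) s (by simp [h.2.1, h.2.2])]

/-- For `r_i ≤ m < r_{i+1}` this is `a r_i`: the part that rotating along the chain
`[r₀, …, r_q]` replaces by `c - 1` among the first `m` parts. -/
def chainValueAt (a : ℕ → ℕ) : List ℕ → ℕ → ℕ
  | [], _ => 0
  | [r], _ => a r
  | r :: r' :: l, m => if m < r' then a r else chainValueAt a (r' :: l) m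

lemma countGE_excess_sub_le {a b : ℕ → ℕ} {c j t p m : ℕ} (hpm : p ≤ m) (hbj : b j + 1 = c)
    (ht : t ≤ b j) (hgap : ∀ s ∈ Ioc p m, t ≤ a s → c ≤ a s) :
    (countGE b c m - countGE a c m + if j ≤ m then 1 else 0)
        - (countGE b c p - countGE a c p + if j ≤ p then 1 else 0)
      ≤ (countGE b t m - countGE a t m) - (countGE b t p - countGE a t p) := by
  have ha := countGE_sub_eq_of_gap hpm (show t ≤ c by omega) hgap
  by_cases hj : j ∈ Ioc p m
  · have hb := countGE_sub_add_one_le hj ht (show b j < c by omega)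
    rw [mem_Ioc] at hj
    rw [if_pos hj.2, if_neg (by omega)]
    omega
  · have hb := countGE_sub_le (x := b) (show t ≤ c by omega) hpm
    rw [mem_Ioc] at hj
    split_ifs <;> omega

/-- The chains `r = r₀ < r₁ < ⋯ < r_q` computed by `suppChain`, characterised without `sInf`. -/
inductive IsSuppChain (a : ℕ → ℕ) (c : ℕ) : ℕ → List ℕ → Prop
  | last (r : ℕ) (h : a r = c - 1) : IsSuppChain a c r [r]
  | cons (r r' : ℕ) (l : List ℕ) (hrr' : r < r') (hlt : a r < a r')
      (hgap : ∀ s, r < s → s < r' → ¬(a r < a s ∧ a s ≤ c - 1)) (hl : IsSuppChain a c r' l) :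
      IsSuppChain a c r (r :: l)

namespace IsSuppChain

variable {a : ℕ → ℕ} {c r : ℕ} {L : List ℕ}

lemma head_eq {r' : ℕ} {l : List ℕ} (h : IsSuppChain a c r' l) : ∃ l', l = r' :: l' := by
  cases h <;> exact ⟨_, rfl⟩

lemma le_sub_one (h : IsSuppChain a c r L) : a r ≤ c - 1 := by
  induction h with
  | last r h => exact h.le
  | cons r r' l _ hlt _ _ ih => omega

lemma le_of_mem (h : IsSuppChain a c r L) : ∀ x ∈ L, r ≤ x := by
  induction h with
  | last r h => simp
  | cons r r' l hrr' _ _ _ ih =>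
    rintro x (_ | ⟨_, hx⟩)
    · exact le_rfl
    · exact hrr'.le.trans (ih x hx)

lemma applyTranspositions_self (h : IsSuppChain a c r L) : applyTranspositions a L r = c - 1 := by
  induction h with
  | last r h => exact h
  | cons r r' l hrr' _ _ hl ih =>
    obtain ⟨l', rfl⟩ := hl.head_eq
    rw [applyTranspositions, swapParts_apply_left, ih]

lemma applyTranspositions_of_lt {s : ℕ} (h : IsSuppChain a c r L) (hs : s < r) :
    applyTranspositions a L s = a s :=
  applyTranspositions_of_notMem a L s fun hmem => by have := h.le_of_mem s hmem; omega

lemma lswapLE (h : IsSuppChain a c r L) (hr : 0 < r) : LswapLE (applyTranspositions a L) a := by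
  induction h with
  | last r h => exact .refl
  | cons r r' l hrr' hlt _ hl ih =>
    obtain ⟨l', rfl⟩ := hl.head_eq
    refine (ih (by omega)).tail ⟨r, r', hr, hrr', ?_, rfl⟩
    rw [hl.applyTranspositions_of_lt hrr', hl.applyTranspositions_self]
    have := hl.le_sub_one
    omega

lemma countGE_applyTranspositions (h : IsSuppChain a c r L) (hr : 0 < r) (t m : ℕ) :
    countGE (applyTranspositions a L) t m
      = countGE a t m + if r ≤ m ∧ chainValueAt a L m < t ∧ t ≤ c - 1 then 1 else 0 := by
  induction h with
  | last r h =>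
    rw [applyTranspositions, chainValueAt, if_neg (by omega), add_zero]
  | cons r r' l hrr' hlt _ hl ih =>
    obtain ⟨l', rfl⟩ := hl.head_eq
    have hle := hl.le_sub_one
    rw [applyTranspositions, countGE_swapParts hr hrr' (by
      rw [hl.applyTranspositions_of_lt hrr', hl.applyTranspositions_self]; omega),
      ih (by omega), hl.applyTranspositions_of_lt hrr', hl.applyTranspositions_self, chainValueAt]
    split_ifs <;> omega

lemma exists_chainValueAt_eq (h : IsSuppChain a c r L) :
    ∃ N, ∀ m, N ≤ m → chainValueAt a L m = c - 1 := by
  induction h with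
  | last r h => exact ⟨0, fun _ _ => h⟩
  | cons r r' l hrr' _ _ hl ih =>
    obtain ⟨l', rfl⟩ := hl.head_eq
    obtain ⟨N, hN⟩ := ih
    exact ⟨max N r', fun m hm => by
      rw [chainValueAt, if_neg (by omega), hN m (le_of_max_le_left hm)]⟩

lemma countGE_excess_le {b : ℕ → ℕ} {j : ℕ} (h : IsSuppChain a c r L) (hbj : b j + 1 = c)
    (hanchor : ∀ t, a r < t → t ≤ c - 1 →
      (countGE b c (r - 1) - countGE a c (r - 1) + if j ≤ r - 1 then 1 else 0)
        ≤ countGE b t (r - 1) - countGE a t (r - 1)) :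
    ∀ m t, r ≤ m → chainValueAt a L m < t → t ≤ c - 1 →
      (countGE b c m - countGE a c m + if j ≤ m then 1 else 0)
        ≤ countGE b t m - countGE a t m := by
  induction h with
  | last r h =>
    intro m t _ hm ht
    rw [chainValueAt] at hm
    omega
  | cons r r' l hrr' hlt hgap hl ih =>
    have hseg : ∀ m t, r ≤ m → m < r' → a r < t → t ≤ c - 1 →
        (countGE b c m - countGE a c m + if j ≤ m then 1 else 0)
          ≤ countGE b t m - countGE a t m := by
      intro m t hrm hmr' hrt htc
      have hstep := countGE_excess_sub_le (a := a) (b := b) (p := r - 1) (m := m) (by omega) hbj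
        (show t ≤ b j by omega) fun s hs hts => by
          rw [mem_Ioc] at hs
          rcases (show r = s ∨ r < s by omega) with rfl | hrs
          · omega
          · have := hgap s hrs (by omega)
            omega
      have := hanchor t hrt htc
      omega
    obtain ⟨l', rfl⟩ := hl.head_eq
    intro m t hrm hm htc
    rw [chainValueAt] at hm
    split_ifs at hm with hmr'
    · exact hseg m t hrm hmr' hm htc
    · exact ih (fun t hrt htc => hseg (r' - 1) t (by omega) (by omega) (by omega) htc)
        m t (by omega) hm htc

end IsSuppChain

lemma isSuppChain_suppChain {a : ℕ → ℕ} {c : ℕ} (fuel r : ℕ) (hr : a r ≤ c - 1)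
    (hfuel : c - 1 - a r ≤ fuel) (hex : ∃ s, r ≤ s ∧ a s = c - 1) :
    IsSuppChain a c r (suppChain a c fuel r) := by
  induction fuel generalizing r with
  | zero => exact .last r (by omega)
  | succ fuel ih =>
    obtain ⟨t, hrt, ht⟩ := hex
    rw [suppChain]
    split_ifs with hnext
    · obtain ⟨hrr', hlt, hle⟩ := Nat.sInf_mem hnext
      refine .cons r _ _ hrr' hlt (fun s hrs hsr' hmem => Nat.notMem_of_lt_sInf hsr' ⟨hrs, hmem⟩)
        (ih _ hle (by omega) ⟨t, Nat.sInf_le ⟨?_, ?_, ht.le⟩, ht⟩)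
      all_goals rcases hrt.eq_or_lt with rfl | hrt <;> omega
    · refine .last r ?_
      rcases hrt.eq_or_lt with rfl | hrt
      · exact ht
      · by_contra hne
        exact hnext ⟨t, hrt, by omega, ht.le⟩

lemma Addable.isSuppChain {a : ℕ → ℕ} {c r : ℕ} (h : Addable a c r) :
    IsSuppChain a c r (suppChain a c c r) :=
  isSuppChain_suppChain c r (by have := h.2.2.1; omega) (by omega) h.2.2.2

lemma Addable.lswapLE_suppComp {a : ℕ → ℕ} {c r : ℕ} (h : Addable a c r) :
    LswapLE (suppComp a c r) a :=
  h.isSuppChain.lswapLE h.2.1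

lemma Dominates.addable {a b : ℕ → ℕ} {M c j p : ℕ} (hD : Dominates b a M) (hbj : b j + 1 = c)
    (hpj : p < j) (hp : countGE a c p = countGE b c p)
    (hstrict : ∀ m, p < m → m < j → countGE a c m < countGE b c m) : Addable a c (p + 1) := by
  refine ⟨by omega, by omega, ?_, ?_⟩
  · by_contra! hca
    have ha := countGE_succ a c p
    have hb := countGE_succ b c p
    have hle := hD.countGE_le c (p + 1)
    rw [if_pos hca] at ha
    rcases (show p + 1 = j ∨ p + 1 < j by omega) with hj | hj
    · rw [← hj] at hbj
      rw [if_neg (by omega)] at hb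
      omega
    · have := hstrict (p + 1) (by omega) hj
      split_ifs at hb <;> omega
  · by_contra! hnone
    set N := max M j
    have ha := countGE_sub_eq_of_gap (x := a) (show p ≤ N by omega) (Nat.sub_le c 1)
      fun s hs hs' => by
        rw [mem_Ioc] at hs
        have := hnone s hs.1
        omega
    have hb := countGE_sub_add_one_le (x := b) (t := c - 1) (u := c)
      (show j ∈ Ioc p N by rw [mem_Ioc]; omega) (by omega) (by omega)
    have h1 := hD.countGE_eq (c - 1) N (le_max_left _ _)
    have h2 := hD.countGE_eq c N (le_max_left _ _)
    have h3 := hD.countGE_le (c - 1) p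
    omega

lemma Dominates.add_eComp_of_isSuppChain {a b : ℕ → ℕ} {M c j r : ℕ} {L : List ℕ}
    (hD : Dominates b a M) (hL : IsSuppChain a c r L) (hr : 0 < r) (hrj : r ≤ j)
    (hbj : b j + 1 = c) (hpre : countGE a c (r - 1) = countGE b c (r - 1))
    (hstrict : ∀ m, r ≤ m → m < j → countGE a c m < countGE b c m) :
    ∃ M', Dominates (b + eComp j) (applyTranspositions a L + eComp r) M' := by
  have hx : ∀ t m, countGE (b + eComp j) t m
      = countGE b t m + if j ≤ m ∧ t = c then 1 else 0 := fun t m => by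
    rw [countGE_add_eComp (by omega), hbj]
  have hy : ∀ t m, countGE (applyTranspositions a L + eComp r) t m
      = countGE a t m + (if r ≤ m ∧ chainValueAt a L m < t ∧ t ≤ c - 1 then 1 else 0)
        + if r ≤ m ∧ t = c then 1 else 0 := fun t m => by
    rw [countGE_add_eComp hr, hL.countGE_applyTranspositions hr, hL.applyTranspositions_self]
    congr 2
    simp only [eq_iff_iff]
    omega
  obtain ⟨N, hN⟩ := hL.exists_chainValueAt_eq
  refine ⟨max (max M N) j, ?_, fun t m => ?_, fun t m hm => ?_⟩
  · simp [eComp, hL.applyTranspositions_of_lt hr, hD.zero_eq, show 0 ≠ j by omega,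
      show 0 ≠ r by omega]
  · rw [hx, hy]
    have hle := hD.countGE_le t m
    have hstrict_m := hstrict m
    rcases eq_or_ne t c with rfl | htc
    · split_ifs <;> omega
    simp only [htc, and_false, ↓reduceIte, add_zero]
    split_ifs with hind
    · have hexcess := hL.countGE_excess_le hbj
        (fun t _ _ => by have := hD.countGE_le t (r - 1); split_ifs <;> omega)
        m t hind.1 hind.2.1 hind.2.2
      have hc := hD.countGE_le c m
      split_ifs at hexcess <;> omega
    · omega
  · rw [hx, hy, hN m (by omega), hD.countGE_eq t m (by omega)]
    split_ifs <;> omega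

theorem exists_addable_lswapLE {a b : ℕ → ℕ} {j : ℕ} (hb : LswapLE b a) (hj : 1 ≤ j) :
    ∃ c r, r ≤ j ∧ Addable a c r ∧ LswapLE (b + eComp j) (suppComp a c r + eComp r) := by
  obtain ⟨M, hD⟩ := hb.exists_dominates
  set c := b j + 1
  set p := Nat.findGreatest (fun m => countGE b c m ≤ countGE a c m) (j - 1)
  have hpj : p < j := by
    have := Nat.findGreatest_le (P := fun m => countGE b c m ≤ countGE a c m) (j - 1)
    omega
  have hp : countGE a c p = countGE b c p := le_antisymm (hD.countGE_le c p)
    (Nat.findGreatest_spec (P := fun m => countGE b c m ≤ countGE a c m) (Nat.zero_le _)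
      (by rw [countGE_zero, countGE_zero]))
  have hstrict : ∀ m, p < m → m < j → countGE a c m < countGE b c m := fun m hpm hmj =>
    lt_of_not_ge (Nat.findGreatest_is_greatest hpm (by omega))
  have hadd := hD.addable rfl hpj hp hstrict
  obtain ⟨M', hD'⟩ :=
    hD.add_eComp_of_isSuppChain hadd.isSuppChain (by omega) hpj rfl hp hstrict
  exact ⟨c, p + 1, hpj, hadd, hD'.lswapLE⟩

theorem statement3_general (k : ℕ) (a : ℕ → ℕ) :
    Dset a k =
      {T | ∃ c j, j ≤ k ∧ Addable a c j ∧ T ∈ KD (suppComp a c j + eComp j)} := by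
  ext T
  constructor
  · rintro ⟨b, j, hb, hj, hjk, hT⟩
    obtain ⟨c, r, hrj, hadd, hle⟩ := exists_addable_lswapLE hb hj
    exact ⟨c, r, hrj.trans hjk, hadd, KD_subset_of_lswapLE hle hT⟩
  · rintro ⟨c, j, hjk, hadd, hT⟩
    exact ⟨suppComp a c j, j, hadd.lswapLE_suppComp, hadd.2.1, hjk, hT⟩

/-- `D(a,k)` equals the union over addable cells `(c,j)` with `j ≤ k`. -/
theorem statement3 (n k : ℕ) (a : ℕ → ℕ) (ha : ∀ i, n < i → a i = 0) (hk : 1 ≤ k) :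
    Dset a k =
      {T | ∃ c j, j ≤ k ∧ Addable a c j ∧ T ∈ KD (suppComp a c j + eComp j)} :=
  statement3_general k a
end

section
/- Let a be a weak composition and k a positive integer, and suppose (c, r) is an addable cell for a with r ≤ k. Then there exists a row index s with r ≤ s ≤ k such that (c, s) is a k-addable cell for a and supp_a^{(c,r)} ⪯ supp_a^{(c,s)} in left swap order. -/
attribute [local instance] Classical.propDecidable

/-! ### Auxiliary lemmas for Statement 4 -/

namespace Statement4Aux

variable (a : ℕ → ℕ) (c : ℕ)

/-- The candidate set for the next chain index. -/
def sset (x : ℕ) : Set ℕ := {s | x < s ∧ a x < a s ∧ a s ≤ c - 1}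

lemma applyT_cons (x y : ℕ) (l : List ℕ) :
    applyTranspositions a (x :: y :: l) = swapParts (applyTranspositions a (y :: l)) x y := rfl

lemma applyT_notmem : ∀ (l : List ℕ) (t : ℕ), t ∉ l → applyTranspositions a l t = a t
  | [], _, _ => rfl
  | [_], _, _ => rfl
  | x :: y :: l, t, h => by
      have h1 : t ≠ x := by simp at h; tauto
      have h2 : t ∉ y :: l := by simp at h ⊢; tauto
      have h3 : t ≠ y := by simp at h2; tauto
      rw [applyT_cons]
      show (if t = x then _ else if t = y then _ else applyTranspositions a (y :: l) t) = a t
      rw [if_neg h1, if_neg h3]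
      exact applyT_notmem (y :: l) t h2

lemma suppChain_zero (x : ℕ) : suppChain a c 0 x = [x] := by
  simp [suppChain]

lemma suppChain_succ (f x : ℕ) :
    suppChain a c (f + 1) x =
      if (sset a c x).Nonempty then
        x :: suppChain a c f (sInf (sset a c x))
      else [x] := by
  simp only [suppChain]
  rfl

lemma suppChain_notP (f x : ℕ) (h : ¬ (sset a c x).Nonempty) : suppChain a c f x = [x] := by
  cases f with
  | zero => exact suppChain_zero a c x
  | succ f => rw [suppChain_succ, if_neg h]

lemma chain_head : ∀ (f x : ℕ), ∃ l, suppChain a c f x = x :: l := by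
  intro f x
  cases f with
  | zero => exact ⟨[], suppChain_zero a c x⟩
  | succ f =>
      rw [suppChain_succ]
      by_cases h : (sset a c x).Nonempty
      · exact ⟨_, by rw [if_pos h]⟩
      · exact ⟨[], by rw [if_neg h]⟩

lemma chain_mem : ∀ (f x t : ℕ), t ∈ suppChain a c f x → x ≤ t := by
  intro f
  induction f with
  | zero => intro x t ht; rw [suppChain_zero] at ht; simp at ht; omega
  | succ f ih =>
      intro x t ht
      rw [suppChain_succ] at ht
      by_cases h : (sset a c x).Nonempty
      · rw [if_pos h] at ht
        rcases List.mem_cons.mp ht with h' | h'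
        · omega
        · have hy := Nat.sInf_mem h
          have := ih _ _ h'
          have : x < sInf (sset a c x) := hy.1
          omega
      · rw [if_neg h] at ht; simp at ht; omega

lemma headval : ∀ (f x : ℕ), a x ≤ applyTranspositions a (suppChain a c f x) x := by
  intro f
  induction f with
  | zero => intro x; rw [suppChain_zero]; exact le_refl _
  | succ f ih =>
      intro x
      rw [suppChain_succ]
      by_cases h : (sset a c x).Nonempty
      · rw [if_pos h]
        set y := sInf (sset a c x) with hy
        have hysset : y ∈ sset a c x := Nat.sInf_mem h
        obtain ⟨l, hl⟩ := chain_head a c f y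
        rw [hl, applyT_cons]
        show a x ≤ (if x = x then applyTranspositions a (y :: l) y else _)
        rw [if_pos rfl, ← hl]
        have := ih y
        have hxy : a x < a y := hysset.2.1
        omega
      · rw [if_neg h]; exact le_refl _

lemma fuel_eq : ∀ (f g x : ℕ), c - 1 - a x ≤ f → c - 1 - a x ≤ g →
    suppChain a c f x = suppChain a c g x := by
  intro f
  induction f with
  | zero =>
      intro g x hf _
      have hax : c - 1 ≤ a x := by omega
      have hP : ¬ (sset a c x).Nonempty := by
        rintro ⟨t, ht1, ht2, ht3⟩; omega
      rw [suppChain_zero, suppChain_notP a c g x hP]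
  | succ f ih =>
      intro g x hf hg
      by_cases h : (sset a c x).Nonempty
      · obtain ⟨t, ht1, ht2, ht3⟩ := h
        have hax : a x < c - 1 := by omega
        obtain ⟨g', rfl⟩ : ∃ g', g = g' + 1 := ⟨g - 1, by omega⟩
        rw [suppChain_succ, suppChain_succ, if_pos ⟨t, ht1, ht2, ht3⟩,
          if_pos ⟨t, ht1, ht2, ht3⟩]
        set y := sInf (sset a c x) with hy
        have hysset : y ∈ sset a c x := Nat.sInf_mem ⟨t, ht1, ht2, ht3⟩
        have h1 : c - 1 - a y ≤ f := by have := hysset.2.1; have := hysset.2.2; omega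
        have h2 : c - 1 - a y ≤ g' := by have := hysset.2.1; have := hysset.2.2; omega
        rw [ih g' y h1 h2]
      · rw [suppChain_notP a c _ x h, suppChain_notP a c g x h]

lemma suppComp_notP (x : ℕ) (h : ¬ (sset a c x).Nonempty) : suppComp a c x = a := by
  show applyTranspositions a (suppChain a c c x) = a
  rw [suppChain_notP a c c x h]
  rfl

lemma suppComp_rec (x : ℕ) (h : (sset a c x).Nonempty) :
    suppComp a c x = swapParts (suppComp a c (sInf (sset a c x))) x (sInf (sset a c x)) := by
  obtain ⟨t, ht1, ht2, ht3⟩ := h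
  obtain ⟨c', rfl⟩ : ∃ c', c = c' + 1 := ⟨c - 1, by omega⟩
  set y := sInf (sset a (c' + 1) x) with hy
  have hchain : suppChain a (c' + 1) (c' + 1) x = x :: suppChain a (c' + 1) (c' + 1) y := by
    rw [suppChain_succ, if_pos ⟨t, ht1, ht2, ht3⟩, ← hy,
      fuel_eq a (c' + 1) c' (c' + 1) y (by omega) (by omega)]
  obtain ⟨l, hl⟩ := chain_head a (c' + 1) (c' + 1) y
  show applyTranspositions a (suppChain a (c' + 1) (c' + 1) x) = _
  rw [hchain, hl, applyT_cons, ← hl]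
  rfl

lemma suppComp_lt (x t : ℕ) (h : t < x) : suppComp a c x t = a t := by
  show applyTranspositions a (suppChain a c c x) t = a t
  apply applyT_notmem
  intro hmem
  have := chain_mem a c c x t hmem
  omega

lemma suppComp_head (x : ℕ) : a x ≤ suppComp a c x x := headval a c c x

/-- The terminal case of the main induction. -/
lemma case2 (k x : ℕ) (hc : 1 ≤ c) (hx : 1 ≤ x) (hxc : a x < c)
    (hl : ∃ l, x ≤ l ∧ a l = c - 1) (hxk : x ≤ k)
    (hcase : ¬ ((sset a c x).Nonempty ∧ sInf (sset a c x) ≤ k)) :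
    ∃ s, x ≤ s ∧ s ≤ k ∧ KAddable a k c s ∧
      LswapLE (suppComp a c x) (suppComp a c s) := by
  classical
  set T : Set ℕ := {t | x ≤ t ∧ t ≤ k ∧ a t = a x} with hT
  have hTne : T.Nonempty := ⟨x, le_refl x, hxk, rfl⟩
  have hTbdd : BddAbove T := ⟨k, fun t ht => ht.2.1⟩
  set s := sSup T with hs
  have hsT : s ∈ T := Nat.sSup_mem hTne hTbdd
  have hsmax : ∀ t ∈ T, t ≤ s := fun t ht => le_csSup hTbdd ht
  obtain ⟨hxs, hsk, has⟩ := hsT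
  obtain ⟨l, hlx, hlval⟩ := hl
  by_cases hP : (sset a c x).Nonempty
  · -- chain continues, but the next index jumps beyond k
    have haxc1 : a x < c - 1 := by
      obtain ⟨t, _, ht2, ht3⟩ := hP; omega
    set y := sInf (sset a c x) with hy
    have hky : k < y := by
      by_contra hcon
      exact hcase ⟨hP, by omega⟩
    have hysset : y ∈ sset a c x := Nat.sInf_mem hP
    obtain ⟨hy1, hy2, hy3⟩ := hysset
    have hlx' : x < l := by
      rcases eq_or_lt_of_le hlx with rfl | hgt
      · omega
      · exact hgt
    have hly : y ≤ l := by
      rw [hy]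
      exact Nat.sInf_le ⟨hlx', by omega, by omega⟩
    -- the chain from s also continues with y
    have hPs : (sset a c s).Nonempty := ⟨y, by omega, by rw [has]; exact hy2, hy3⟩
    have hys : sInf (sset a c s) = y := by
      have hmem := Nat.sInf_mem hPs
      obtain ⟨hm1, hm2, hm3⟩ := hmem
      rw [has] at hm2
      apply le_antisymm
      · exact Nat.sInf_le ⟨by omega, by rw [has]; exact hy2, hy3⟩
      · rw [hy]
        exact Nat.sInf_le ⟨by omega, hm2, hm3⟩
    set B := suppComp a c y with hB
    have h1 : suppComp a c x = swapParts B x y := suppComp_rec a c x hP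
    have h2 : suppComp a c s = swapParts B s y := by
      have := suppComp_rec a c s hPs
      rwa [hys] at this
    have hBx : B x = a x := suppComp_lt a c y x (by omega)
    have hBs : B s = a s := suppComp_lt a c y s (by omega)
    have hBy : a y ≤ B y := suppComp_head a c y
    refine ⟨s, hxs, hsk, ?_, ?_⟩
    · -- KAddable
      refine ⟨hc, by omega, hsk, by omega, fun _ => ⟨l, by omega, hlval⟩, ?_⟩
      intro i hsi hik
      by_contra hcon
      push_neg at hcon
      obtain ⟨hcon1, hcon2⟩ := hcon
      have hai : a x ≤ a i := by omega
      rcases eq_or_lt_of_le hai with heq | hlt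
      · have hiT : i ∈ T := ⟨by omega, hik, heq.symm⟩
        have := hsmax i hiT; omega
      · have hisset : i ∈ sset a c x := ⟨by omega, hlt, by omega⟩
        have : y ≤ i := by rw [hy]; exact Nat.sInf_le hisset
        omega
    · -- LswapLE
      rcases eq_or_lt_of_le hxs with heq | hxlt
      · rw [heq]
        exact Relation.ReflTransGen.refl
      · have hxs' : ¬ x = s := by omega
        have hxy' : ¬ x = y := by omega
        have hsx' : ¬ s = x := by omega
        have hsy' : ¬ s = y := by omega
        have hyx' : ¬ y = x := by omega
        have hys' : ¬ y = s := by omega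
        apply Relation.ReflTransGen.single
        refine ⟨x, s, hx, hxlt, ?_, ?_⟩
        · -- value comparison
          have hvx : suppComp a c s x = a x := by
            rw [h2]
            show (if x = s then B y else if x = y then B s else B x) = a x
            rw [if_neg hxs', if_neg hxy']
            exact hBx
          have hvs : suppComp a c s s = B y := by
            rw [h2]
            show (if s = s then B y else if s = y then B s else B s) = B y
            rw [if_pos rfl]
          rw [hvx, hvs]
          omega
        · -- swap equality
          rw [h1, h2]
          funext t
          simp only [swapParts]
          by_cases htx : t = x
          · subst htx
            simp [hxs', hxy']
          · by_cases hts : t = s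
            · subst hts
              simp [hsx', hsy', hxs', hxy', hBx, hBs, has]
            · by_cases hty : t = y
              · subst hty
                simp [hyx', hys', hxs', hxy', hBx, hBs, has]
              · simp [htx, hts, hty]
  · -- chain from x is trivial; a x = c - 1
    have haxe : a x = c - 1 := by
      rcases lt_or_ge (a x) (c - 1) with hlt | hge
      · exfalso
        have hlx' : x < l := by
          rcases eq_or_lt_of_le hlx with rfl | hgt
          · omega
          · exact hgt
        exact hP ⟨l, hlx', by omega, by omega⟩
      · omega
    have hPs : ¬ (sset a c s).Nonempty := by
      rintro ⟨t, ht1, ht2, ht3⟩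
      rw [has] at ht2; omega
    refine ⟨s, hxs, hsk, ?_, ?_⟩
    · refine ⟨hc, by omega, hsk, by omega, fun hcon => absurd hcon (by omega), ?_⟩
      intro i hsi hik
      by_contra hcon
      push_neg at hcon
      obtain ⟨hcon1, hcon2⟩ := hcon
      have hia : a i = a x := by omega
      have hiT : i ∈ T := ⟨by omega, hik, hia⟩
      have := hsmax i hiT; omega
    · rw [suppComp_notP a c x hP, suppComp_notP a c s hPs]
      exact Relation.ReflTransGen.refl

lemma mainClaim (k : ℕ) (hc : 1 ≤ c) :
    ∀ m x, c - 1 - a x ≤ m → 1 ≤ x → a x < c → (∃ l, x ≤ l ∧ a l = c - 1) → x ≤ k →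
    ∃ s, x ≤ s ∧ s ≤ k ∧ KAddable a k c s ∧
      LswapLE (suppComp a c x) (suppComp a c s) := by
  intro m
  induction m with
  | zero =>
      intro x hm hx hxc hl hxk
      apply case2 a c k x hc hx hxc hl hxk
      rintro ⟨⟨t, ht1, ht2, ht3⟩, _⟩
      omega
  | succ m ih =>
      intro x hm hx hxc hl hxk
      by_cases hcase : (sset a c x).Nonempty ∧ sInf (sset a c x) ≤ k
      · obtain ⟨hP, hyk⟩ := hcase
        set y := sInf (sset a c x) with hy
        have hysset : y ∈ sset a c x := Nat.sInf_mem hP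
        obtain ⟨hxy, haxy, hayc⟩ := hysset
        obtain ⟨l, hlx, hlval⟩ := hl
        have hlx' : x < l := by
          rcases eq_or_lt_of_le hlx with rfl | hgt
          · omega
          · exact hgt
        have hly : y ≤ l := by
          rw [hy]
          exact Nat.sInf_le ⟨hlx', by omega, by omega⟩
        obtain ⟨s, hys, hsk, hka, hlsw⟩ :=
          ih y (by omega) (by omega) (by omega) ⟨l, hly, hlval⟩ hyk
        refine ⟨s, by omega, hsk, hka, ?_⟩
        apply hlsw.tail
        refine ⟨x, y, hx, hxy, ?_, ?_⟩
        · have hv1 : suppComp a c y x = a x := suppComp_lt a c y x hxy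
          have hv2 : a y ≤ suppComp a c y y := suppComp_head a c y
          omega
        · exact suppComp_rec a c x hP
      · exact case2 a c k x hc hx hxc hl hxk hcase

end Statement4Aux

/-- Every addable cell weakly below row `k` is dominated by a
`k`-addable cell in the same column. -/
theorem statement4 (n : ℕ) (a : ℕ → ℕ) (ha : ∀ i, n < i → a i = 0)
    (k c r : ℕ) (hk : 1 ≤ k) (hadd : Addable a c r) (hrk : r ≤ k) :
    ∃ s, r ≤ s ∧ s ≤ k ∧ KAddable a k c s ∧
      LswapLE (suppComp a c r) (suppComp a c s) := by
  obtain ⟨hc, hr, harc, hl⟩ := hadd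
  exact Statement4Aux.mainClaim a c k hc c r (by omega) hr harc hl hrk
end

section
/- Let a be a weak composition and k a positive integer. If (c, r) and (c, s) are both k-addable cells for a with r < s, then a_r > a_s, and the weak compositions supp_a^{(c,r)} + e_r and supp_a^{(c,s)} + e_s are incomparable in left swap order (neither is ⪯ the other). -/
/-!
For a threshold `t` and a length `p`, the number of parts `≥ t` among the first `p` parts
can only grow under a left swap: a swap inside the prefix permutes it, and a swap leaving
the prefix raises a part. For a `k`-addable cell `(c, r)`, the support chain leaves the rows
`1, …, k` right after `r` and ends at a part `c - 1`, so `supp_a^{(c,r)} + e_r` agrees with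
`a` on the rows `1, …, k` except that row `r` is raised to `c`. With `a_s < a_r < c`,
counting parts `≥ c` among the first `r` rows, and parts `≥ a_r` among the first `s` rows,
separates the two compositions in opposite directions.
-/


attribute [local instance] Classical.propDecidable

lemma applyTranspositions_apply_of_not_mem (a : ℕ → ℕ) :
    ∀ {L : List ℕ} {i : ℕ}, i ∉ L → applyTranspositions a L i = a i
  | [], _, _ => rfl
  | [_], _, _ => rfl
  | x :: y :: rest, i, hi => by
    simp only [List.mem_cons, not_or] at hi
    simp only [applyTranspositions, swapParts, if_neg hi.1, if_neg hi.2.1]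
    exact applyTranspositions_apply_of_not_mem a (by simp [hi.2.1, hi.2.2])

lemma applyTranspositions_cons_apply_head (a : ℕ → ℕ) :
    ∀ {r m : ℕ} {L : List ℕ}, (r :: L).getLast? = some m →
      applyTranspositions a (r :: L) r = a m
  | _, _, [], h => by
    simp only [List.getLast?_singleton, Option.some.injEq] at h
    simp [applyTranspositions, h]
  | _, _, _ :: _, h => by
    rw [List.getLast?_cons_cons] at h
    simp only [applyTranspositions, swapParts]
    exact applyTranspositions_cons_apply_head a h

section SuppChain

variable {a : ℕ → ℕ} {c : ℕ}

lemma suppChain_succ (fuel r : ℕ) :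
    suppChain a c (fuel + 1) r =
      if (∃ s, r < s ∧ a r < a s ∧ a s ≤ c - 1) then
        r :: suppChain a c fuel (sInf {s | r < s ∧ a r < a s ∧ a s ≤ c - 1})
      else [r] :=
  rfl

lemma sInf_suppChainStep_mem {r : ℕ} (h : ∃ s, r < s ∧ a r < a s ∧ a s ≤ c - 1) :
    r < sInf {s | r < s ∧ a r < a s ∧ a s ≤ c - 1} ∧
      a r < a (sInf {s | r < s ∧ a r < a s ∧ a s ≤ c - 1}) ∧
      a (sInf {s | r < s ∧ a r < a s ∧ a s ≤ c - 1}) ≤ c - 1 :=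
  Nat.sInf_mem h

lemma suppChain_eq_cons (fuel r : ℕ) : ∃ L, suppChain a c fuel r = r :: L := by
  cases fuel with
  | zero => exact ⟨[], rfl⟩
  | succ fuel =>
    rw [suppChain_succ]
    split
    · exact ⟨_, rfl⟩
    · exact ⟨[], rfl⟩

lemma le_of_mem_suppChain : ∀ {fuel r m : ℕ}, m ∈ suppChain a c fuel r → r ≤ m
  | 0, _, _, h => (List.mem_singleton.mp h).ge
  | fuel + 1, r, m, h => by
    rw [suppChain_succ] at h
    split at h
    case isTrue hne =>
      rcases List.mem_cons.mp h with rfl | h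
      · exact le_rfl
      · exact (sInf_suppChainStep_mem hne).1.le.trans (le_of_mem_suppChain h)
    case isFalse => exact (List.mem_singleton.mp h).ge

lemma eq_or_lt_of_mem_suppChain {k r : ℕ}
    (hgap : ∀ i, r < i → i ≤ k → a i < a r ∨ c ≤ a i) :
    ∀ {fuel m : ℕ}, m ∈ suppChain a c fuel r → m = r ∨ k < m
  | 0, _, h => .inl (List.mem_singleton.mp h)
  | fuel + 1, m, h => by
    rw [suppChain_succ] at h
    split at h
    case isTrue hne =>
      rcases List.mem_cons.mp h with h | h
      · exact .inl h
      · obtain ⟨hlt, hup, hle⟩ := sInf_suppChainStep_mem hne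
        have hm := le_of_mem_suppChain h
        by_contra! hk
        rcases hgap _ hlt (by omega) with h' | h' <;> omega
    case isFalse => exact .inl (List.mem_singleton.mp h)

-- Parts increase strictly along the chain, so fuel `c - 1 - a r` suffices.
lemma exists_getLast?_suppChain :
    ∀ {fuel r : ℕ}, a r ≤ c - 1 → (a r < c - 1 → ∃ l, r < l ∧ a l = c - 1) →
      c - 1 ≤ a r + fuel → ∃ m, (suppChain a c fuel r).getLast? = some m ∧ a m = c - 1
  | 0, r, _, _, hfuel => ⟨r, rfl, by omega⟩
  | fuel + 1, r, hle, hreach, hfuel => by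
    rw [suppChain_succ]
    by_cases hr : a r = c - 1
    · rw [if_neg (by omega)]
      exact ⟨r, rfl, hr⟩
    obtain ⟨l, hrl, hl⟩ := hreach (by omega)
    have hne : ∃ s, r < s ∧ a r < a s ∧ a s ≤ c - 1 := ⟨l, hrl, by omega, by omega⟩
    rw [if_pos hne]
    obtain ⟨-, hup, hle'⟩ := sInf_suppChainStep_mem hne
    set r' := sInf {s | r < s ∧ a r < a s ∧ a s ≤ c - 1}
    have hr'l : r' ≤ l := Nat.sInf_le ⟨hrl, by omega, by omega⟩
    have hreach' : a r' < c - 1 → ∃ l', r' < l' ∧ a l' = c - 1 := fun h =>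
      ⟨l, lt_of_le_of_ne hr'l (by rintro rfl; omega), hl⟩
    obtain ⟨m, hm, ham⟩ := exists_getLast?_suppChain (fuel := fuel) hle' hreach' (by omega)
    obtain ⟨L, hL⟩ := suppChain_eq_cons (a := a) (c := c) fuel r'
    refine ⟨m, ?_, ham⟩
    rw [hL] at hm ⊢
    rwa [List.getLast?_cons_cons]

end SuppChain

lemma swapParts_apply_swap (a : ℕ → ℕ) (i j m : ℕ) :
    swapParts a i j (Equiv.swap i j m) = a m := by
  simp only [swapParts, Equiv.swap_apply_def]
  split_ifs <;> simp_all

def numPartsGE (b : ℕ → ℕ) (t p : ℕ) : ℕ := ((Finset.Icc 1 p).filter (t ≤ b ·)).card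

lemma numPartsGE_le_of_lSwapStep {a b : ℕ → ℕ} (h : LSwapStep a b) (t p : ℕ) :
    numPartsGE a t p ≤ numPartsGE b t p := by
  obtain ⟨i, j, hi, hij, hlt, rfl⟩ := h
  unfold numPartsGE
  by_cases hjp : j ≤ p
  · refine (Finset.card_equiv (Equiv.swap i j) fun m => ?_).le
    have hrange : m ∈ Finset.Icc 1 p ↔ Equiv.swap i j m ∈ Finset.Icc 1 p := by
      simp only [Finset.mem_Icc, Equiv.swap_apply_def]
      split_ifs <;> omega
    simp only [Finset.mem_filter, swapParts_apply_swap, hrange]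
  · refine Finset.card_le_card fun m hm => ?_
    simp only [Finset.mem_filter, Finset.mem_Icc] at hm ⊢
    have hle : a m ≤ swapParts a i j m := by
      unfold swapParts
      split_ifs <;> subst_vars <;> omega
    exact ⟨hm.1, hm.2.trans hle⟩

lemma LswapLE.numPartsGE_le {a b : ℕ → ℕ} (h : LswapLE b a) (t p : ℕ) :
    numPartsGE a t p ≤ numPartsGE b t p := by
  induction h with
  | refl => exact le_rfl
  | tail _ hstep ih => exact ih.trans (numPartsGE_le_of_lSwapStep hstep t p)

lemma numPartsGE_add_ite {f g : ℕ → ℕ} {t p q : ℕ} (hq : q ∈ Finset.Icc 1 p)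
    (hfg : ∀ m ∈ Finset.Icc 1 p, m ≠ q → f m = g m) :
    numPartsGE f t p + (if t ≤ g q then 1 else 0)
      = numPartsGE g t p + (if t ≤ f q then 1 else 0) := by
  simp only [numPartsGE, Finset.card_filter]
  have herase : ∑ m ∈ (Finset.Icc 1 p).erase q, (if t ≤ f m then 1 else 0) =
      ∑ m ∈ (Finset.Icc 1 p).erase q, (if t ≤ g m then 1 else 0) :=
    Finset.sum_congr rfl fun m hm => by
      rw [hfg m (Finset.mem_of_mem_erase hm) (Finset.ne_of_mem_erase hm)]
  rw [← Finset.sum_erase_add _ _ hq, ← Finset.sum_erase_add _ _ hq, herase]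
  ring

lemma numPartsGE_eq_of_eqOn_ne {f g : ℕ → ℕ} {t p q : ℕ} (hq : q ∈ Finset.Icc 1 p)
    (hfg : ∀ m ∈ Finset.Icc 1 p, m ≠ q → f m = g m) (hfgq : t ≤ f q ↔ t ≤ g q) :
    numPartsGE f t p = numPartsGE g t p := by
  have := numPartsGE_add_ite (t := t) hq hfg
  simp only [hfgq] at this
  omega

lemma numPartsGE_eq_add_one_of_eqOn_ne {f g : ℕ → ℕ} {t p q : ℕ} (hq : q ∈ Finset.Icc 1 p)
    (hfg : ∀ m ∈ Finset.Icc 1 p, m ≠ q → f m = g m) (hf : f q < t) (hg : t ≤ g q) :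
    numPartsGE g t p = numPartsGE f t p + 1 := by
  have := numPartsGE_add_ite (t := t) hq hfg
  rw [if_pos hg, if_neg (by omega)] at this
  omega

lemma numPartsGE_congr {f g : ℕ → ℕ} {t p : ℕ} (hfg : ∀ m ∈ Finset.Icc 1 p, f m = g m) :
    numPartsGE f t p = numPartsGE g t p := by
  unfold numPartsGE
  rw [Finset.filter_congr fun m hm => by rw [hfg m hm]]

lemma KAddable.addable {a : ℕ → ℕ} {k c r : ℕ} (h : KAddable a k c r) : Addable a c r := by
  obtain ⟨hc, hr, hrk, hlt, hreach, -⟩ := h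
  refine ⟨hc, hr, hlt, ?_⟩
  by_cases heq : a r = c - 1
  · exact ⟨r, le_rfl, heq⟩
  · obtain ⟨l, hkl, hl⟩ := hreach (by omega)
    exact ⟨l, by omega, hl⟩

lemma suppComp_add_eComp_apply_self {a : ℕ → ℕ} {c r : ℕ} (h : Addable a c r) :
    (suppComp a c r + eComp r) r = c := by
  obtain ⟨hc, -, hlt, s, hrs, hs⟩ := h
  have hreach : a r < c - 1 → ∃ l, r < l ∧ a l = c - 1 := fun h' =>
    ⟨s, lt_of_le_of_ne hrs (by rintro rfl; omega), hs⟩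
  obtain ⟨m, hm, ham⟩ := exists_getLast?_suppChain (fuel := c) (by omega) hreach (by omega)
  obtain ⟨L, hL⟩ := suppChain_eq_cons (a := a) (c := c) c r
  rw [hL] at hm
  simp only [Pi.add_apply, suppComp, hL, applyTranspositions_cons_apply_head a hm, ham,
    eComp, ↓reduceIte]
  exact Nat.sub_add_cancel hc

lemma suppComp_add_eComp_apply_of_ne {a : ℕ → ℕ} {k c r i : ℕ}
    (hgap : ∀ i, r < i → i ≤ k → a i < a r ∨ c ≤ a i) (hik : i ≤ k) (hir : i ≠ r) :
    (suppComp a c r + eComp r) i = a i := by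
  have hnot : i ∉ suppChain a c c r := fun hi =>
    (eq_or_lt_of_mem_suppChain hgap hi).elim hir (by omega)
  simp [suppComp, applyTranspositions_apply_of_not_mem a hnot, eComp, hir]

section KAddable

variable {a : ℕ → ℕ} {k c r p t : ℕ}

lemma KAddable.suppComp_add_eComp_eqOn (hr : KAddable a k c r) (hpk : p ≤ k) :
    ∀ m ∈ Finset.Icc 1 p, m ≠ r → a m = (suppComp a c r + eComp r) m := by
  obtain ⟨-, -, -, -, -, hgap⟩ := hr
  exact fun m hm hmr => (suppComp_add_eComp_apply_of_ne hgap (by simp at hm; omega) hmr).symm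

lemma KAddable.numPartsGE_eq_of_lt (hr : KAddable a k c r) (hpr : p < r) :
    numPartsGE (suppComp a c r + eComp r) t p = numPartsGE a t p := by
  have hpk : p ≤ k := by obtain ⟨-, -, hrk, -⟩ := hr; omega
  exact numPartsGE_congr fun m hm =>
    (hr.suppComp_add_eComp_eqOn hpk m hm (by simp at hm; omega)).symm

lemma KAddable.numPartsGE_eq_of_le_part (hr : KAddable a k c r) (hrp : r ≤ p) (hpk : p ≤ k)
    (ht : t ≤ a r) : numPartsGE (suppComp a c r + eComp r) t p = numPartsGE a t p := by
  obtain ⟨-, hr1, -, hrc, -⟩ := id hr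
  refine (numPartsGE_eq_of_eqOn_ne (by simp [hr1, hrp]) (hr.suppComp_add_eComp_eqOn hpk) ?_).symm
  rw [suppComp_add_eComp_apply_self hr.addable]
  omega

lemma KAddable.numPartsGE_eq_succ (hr : KAddable a k c r) (hrp : r ≤ p) (hpk : p ≤ k)
    (ht : a r < t) (htc : t ≤ c) :
    numPartsGE (suppComp a c r + eComp r) t p = numPartsGE a t p + 1 := by
  obtain ⟨-, hr1, -⟩ := id hr
  exact numPartsGE_eq_add_one_of_eqOn_ne (by simp [hr1, hrp]) (hr.suppComp_add_eComp_eqOn hpk)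
    ht ((suppComp_add_eComp_apply_self hr.addable).symm ▸ htc)

end KAddable

theorem statement5_general (a : ℕ → ℕ)
    (k c r s : ℕ) (hr : KAddable a k c r) (hs : KAddable a k c s) (hrs : r < s) :
    a s < a r ∧
      ¬ LswapLE (suppComp a c r + eComp r) (suppComp a c s + eComp s) ∧
      ¬ LswapLE (suppComp a c s + eComp s) (suppComp a c r + eComp r) := by
  obtain ⟨-, -, hrk, hrc, -, hr_gap⟩ := id hr
  obtain ⟨-, -, hsk, hsc, -, -⟩ := id hs
  have hsr : a s < a r := (hr_gap s hrs hsk).resolve_right (by omega)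
  have hu_c := hr.numPartsGE_eq_succ le_rfl hrk hrc le_rfl
  have hv_c := hs.numPartsGE_eq_of_lt (t := c) hrs
  have hu_ar := hr.numPartsGE_eq_of_le_part hrs.le hsk le_rfl
  have hv_ar := hs.numPartsGE_eq_succ le_rfl hsk hsr hrc.le
  refine ⟨hsr, fun h => ?_, fun h => ?_⟩
  · have := h.numPartsGE_le (a r) s
    omega
  · have := h.numPartsGE_le c r
    omega

/-- Two `k`-addable cells in the same column yield incomparable
support compositions. -/
theorem statement5 (n : ℕ) (a : ℕ → ℕ) (ha : ∀ i, n < i → a i = 0)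
    (k c r s : ℕ) (hr : KAddable a k c r) (hs : KAddable a k c s) (hrs : r < s) :
    a s < a r ∧
      ¬ LswapLE (suppComp a c r + eComp r) (suppComp a c s + eComp s) ∧
      ¬ LswapLE (suppComp a c s + eComp s) (suppComp a c r + eComp r) :=
  statement5_general a k c r s hr hs hrs
end

section
/- Let a be a weakly increasing weak composition of length n (a_1 ≤ a_2 ≤ ⋯ ≤ a_n). Then there exists a bijection φ from KD(a) × KD(e_n) onto the union ⋃_j KD(a + e_j), taken over those 1 ≤ j ≤ n with a_j < a_{j+1} (with the convention that j = n is always included), such that wt(φ(T, U)) = wt(T) + wt(U); moreover, the sets KD(a + e_j) appearing in this union are pairwise disjoint. -/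
attribute [local instance] Classical.propDecidable

/-!
For weakly increasing `a`, a diagram lies in `KD a` exactly when its cells lie in rows
`1, …, n`, each column has as many cells as the same column of `key a`, and the columns are
nested (`ColsNested`). Kohnert moves preserve these conditions; conversely, every such diagram
other than `key a` arises by a Kohnert move from the one obtained by raising the leftmost cell
in the highest row where some cell has an empty upper neighbour.

Through `toDiagram` these diagrams are the semistandard tableaux whose shape is `a` sorted, and
`φ (T, U)` is Schensted column insertion of the row of the single cell of `U` into `T`. The
insertion adds a cell to a column `a j + 1` with `j` a corner of `a`, and reverse bumping from
the lowest cell of that column undoes it. The sets `KD (a + e_j)` are disjoint because distinct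
corners have distinct parts `a j`.
-/

namespace Kohnert

open Finset

noncomputable def colCount (n : ℕ) (D : Diagram) (c s : ℕ) : ℕ :=
  #{r ∈ Icc s n | (c, r) ∈ D}

section colCount

variable {n : ℕ} {D : Diagram} {c s : ℕ}

lemma colCount_anti {s' : ℕ} (h : s ≤ s') : colCount n D c s' ≤ colCount n D c s :=
  card_le_card (filter_subset_filter _ (Icc_subset_Icc h le_rfl))

lemma colCount_le : colCount n D c s ≤ n + 1 - s := by
  simpa [colCount] using card_filter_le (Icc s n) fun r => (c, r) ∈ D

lemma colCount_eq_zero (h : n < s) : colCount n D c s = 0 := by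
  simp [colCount, Icc_eq_empty_of_lt h]

lemma colCount_eq_add {u : ℕ} (hs : s ≤ u + 1) (hu : u ≤ n) :
    colCount n D c s = #{r ∈ Icc s u | (c, r) ∈ D} + colCount n D c (u + 1) := by
  have hsplit : Icc s n = Icc s u ∪ Icc (u + 1) n := by
    ext r; simp only [mem_union, mem_Icc]; omega
  have hdisj : Disjoint (Icc s u) (Icc (u + 1) n) := by
    rw [disjoint_left]; intro r; simp only [mem_Icc]; omega
  rw [colCount, hsplit, filter_union, card_union_of_disjoint (disjoint_filter_filter hdisj),
    colCount]

lemma colCount_eq_ite_add (h : s ≤ n) :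
    colCount n D c s = (if (c, s) ∈ D then 1 else 0) + colCount n D c (s + 1) := by
  rw [colCount_eq_add (u := s) (by omega) h, Icc_self, filter_singleton]
  split_ifs <;> simp

lemma colCount_eq_of_forall_notMem {t : ℕ} (hst : s ≤ t) (ht : t ≤ n + 1)
    (hgap : ∀ x, s ≤ x → x < t → (c, x) ∉ D) : colCount n D c s = colCount n D c t := by
  cases t with
  | zero => rw [Nat.le_zero.1 hst]
  | succ u =>
    rw [colCount_eq_add hst (by omega), card_eq_zero.2, zero_add]
    exact filter_false_of_mem fun x hx =>
      hgap x (mem_Icc.1 hx).1 (Nat.lt_succ_of_le (mem_Icc.1 hx).2)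

lemma colCount_eq_of_forall_mem {u : ℕ} (hs : s ≤ u + 1) (hu : u ≤ n)
    (hfull : ∀ t, s ≤ t → t ≤ u → (c, t) ∈ D) :
    colCount n D c s = colCount n D c (u + 1) + (u + 1 - s) := by
  rw [colCount_eq_add hs hu, filter_true_of_mem fun t ht =>
    hfull t (mem_Icc.1 ht).1 (mem_Icc.1 ht).2, Nat.card_Icc, add_comm]

lemma colCount_le_of_notMem {u : ℕ} (hs : s ≤ u) (hu : u ≤ n) (hnot : (c, u) ∉ D) :
    colCount n D c s ≤ colCount n D c (u + 1) + (u - s) := by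
  have hsub : {r ∈ Icc s u | (c, r) ∈ D} ⊆ Ico s u := by
    intro r hr
    rw [mem_filter, mem_Icc] at hr
    have : r ≠ u := fun h => hnot (h ▸ hr.2)
    rw [mem_Ico]; omega
  have := card_le_card hsub
  rw [Nat.card_Ico] at this
  rw [colCount_eq_add (by omega) hu]
  omega

lemma one_le_colCount {t : ℕ} (hm : (c, t) ∈ D) (h1 : s ≤ t) (h2 : t ≤ n) :
    1 ≤ colCount n D c s :=
  card_pos.2 ⟨t, mem_filter.2 ⟨mem_Icc.2 ⟨h1, h2⟩, hm⟩⟩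

lemma exists_lowest_of_one_le_colCount (h : 1 ≤ colCount n D c s) :
    ∃ t, s ≤ t ∧ t ≤ n ∧ (c, t) ∈ D ∧ ∀ x, s ≤ x → (c, x) ∈ D → t ≤ x := by
  have hex : ∃ t, s ≤ t ∧ t ≤ n ∧ (c, t) ∈ D := by
    obtain ⟨t, ht⟩ := card_pos.1 h
    rw [mem_filter, mem_Icc] at ht
    exact ⟨t, ht.1.1, ht.1.2, ht.2⟩
  obtain ⟨h1, h2, h3⟩ := Nat.find_spec hex
  refine ⟨Nat.find hex, h1, h2, h3, fun x hx hm => ?_⟩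
  by_contra hlt
  exact Nat.find_min hex (not_le.1 hlt) ⟨hx, by omega, hm⟩

lemma colCount_insert {e r : ℕ} (hr : r ≤ n) (hp : (e, r) ∉ D) (c s : ℕ) :
    colCount n (insert (e, r) D) c s = colCount n D c s + if c = e ∧ s ≤ r then 1 else 0 := by
  split_ifs with h
  · obtain ⟨rfl, hs⟩ := h
    calc colCount n (insert (c, r) D) c s = #(insert r {x ∈ Icc s n | (c, x) ∈ D}) := by
          unfold colCount; congr 1; ext x
          simp only [mem_filter, mem_insert, mem_Icc, Set.mem_insert_iff, Prod.mk.injEq, true_and]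
          constructor
          · rintro ⟨hx, rfl | hxD⟩ <;> tauto
          · rintro (rfl | h) <;> tauto
      _ = colCount n D c s + 1 := card_insert_of_notMem (by simp [hp])
  · unfold colCount
    rw [add_zero]
    congr 1; ext x
    simp only [mem_filter, Set.mem_insert_iff, Prod.mk.injEq, and_congr_right_iff]
    intro hx
    refine or_iff_right fun h' => h ⟨h'.1, h'.2 ▸ (mem_Icc.1 hx).1⟩

lemma colCount_diff_singleton {e r : ℕ} (hr : r ≤ n) (hq : (e, r) ∈ D) (c s : ℕ) :
    colCount n D c s = colCount n (D \ {(e, r)}) c s + if c = e ∧ s ≤ r then 1 else 0 := by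
  conv_lhs => rw [← Set.insert_sdiff_self_of_mem hq]
  exact colCount_insert hr (by simp) c s

end colCount

section moveCell

variable {n : ℕ} {D : Diagram} {c p q : ℕ}

lemma colCount_moveCell (hq : (c, q) ∈ D) (hp : (c, p) ∉ D ∨ p = q) (hqn : q ≤ n) (hpn : p ≤ n)
    (e s : ℕ) :
    colCount n (insert (c, p) (D \ {(c, q)})) e s + (if e = c ∧ s ≤ q then 1 else 0) =
      colCount n D e s + if e = c ∧ s ≤ p then 1 else 0 := by
  rcases hp with hp | rfl
  · rw [colCount_insert hpn (by simp [hp]), colCount_diff_singleton hqn hq e s]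
    ring
  · rw [Set.insert_sdiff_singleton, Set.insert_eq_of_mem hq]

lemma colCount_moveCell_of_ne (hq : (c, q) ∈ D) (hp : (c, p) ∉ D ∨ p = q) (hqn : q ≤ n)
    (hpn : p ≤ n) {e : ℕ} (he : e ≠ c) (s : ℕ) :
    colCount n (insert (c, p) (D \ {(c, q)})) e s = colCount n D e s := by
  simpa [he] using colCount_moveCell hq hp hqn hpn e s

lemma colCount_moveCell_of_le (hq : (c, q) ∈ D) (hp : (c, p) ∉ D ∨ p = q) (hqn : q ≤ n)
    (hpn : p ≤ n) {s : ℕ} (hsq : s ≤ q) (hsp : s ≤ p) (e : ℕ) :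
    colCount n (insert (c, p) (D \ {(c, q)})) e s = colCount n D e s := by
  have := colCount_moveCell hq hp hqn hpn e s
  split_ifs at this <;> omega

lemma insert_moveCell_diff (hq : (c, q) ∈ D) (hp : (c, p) ∉ D ∨ p = q) :
    insert (c, q) (insert (c, p) (D \ {(c, q)}) \ {(c, p)}) = D := by
  rcases hp with hp | rfl
  · rw [Set.insert_sdiff_self_of_notMem (by simp [hp]), Set.insert_sdiff_self_of_mem hq]
  · rw [Set.insert_sdiff_self_of_mem hq, Set.insert_sdiff_self_of_mem hq]

end moveCell

def InBox (n : ℕ) (D : Diagram) : Prop := ∀ p ∈ D, 1 ≤ p.1 ∧ 1 ≤ p.2 ∧ p.2 ≤ n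

lemma InBox.colCount_zero {n : ℕ} {D : Diagram} (hD : InBox n D) (c : ℕ) :
    colCount n D c 0 = colCount n D c 1 := by
  rw [colCount_eq_ite_add (Nat.zero_le n), if_neg fun h => absurd (hD _ h).2.1 (by simp),
    zero_add]

/-- Reading columns from the top, the `i`-th cell of column `c + 1` is weakly below the `i`-th
cell of column `c`. -/
def ColsNested (n : ℕ) (D : Diagram) : Prop :=
  ∀ c, 1 ≤ c → ∀ s, colCount n D (c + 1) s ≤ colCount n D c s

lemma ColsNested.anti {n : ℕ} {D : Diagram} (hD : ColsNested n D) {c c' : ℕ} (hc : 1 ≤ c)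
    (h : c ≤ c') (s : ℕ) : colCount n D c' s ≤ colCount n D c s := by
  induction c', h using Nat.le_induction with
  | base => exact le_rfl
  | succ c' hcc' ih => exact (hD c' (hc.trans hcc') s).trans ih

lemma ColsNested.of_column {n : ℕ} {D D' : Diagram} (hD : ColsNested n D) {c : ℕ}
    (hoff : ∀ e, e ≠ c → ∀ s, colCount n D' e s = colCount n D e s)
    (hleft : 2 ≤ c → ∀ s, colCount n D' c s ≤ colCount n D (c - 1) s)
    (hright : ∀ s, colCount n D (c + 1) s ≤ colCount n D' c s) : ColsNested n D' := by
  intro e he s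
  by_cases h1 : e + 1 = c
  · subst h1
    rw [hoff e (by omega)]
    exact hleft (by omega) s
  · by_cases h2 : e = c
    · subst h2
      rw [hoff (e + 1) h1]
      exact hright s
    · rw [hoff e h2, hoff (e + 1) h1]
      exact hD e he s

def keyColLen (a : ℕ → ℕ) (n c : ℕ) : ℕ := #{r ∈ Icc 1 n | c ≤ a r}

/-- For weakly increasing `a` supported on `1, …, n`, these conditions characterise `KD a`. -/
structure FitsKey (a : ℕ → ℕ) (n : ℕ) (D : Diagram) : Prop where
  inBox : InBox n D
  nested : ColsNested n D
  colCount_eq : ∀ c, 1 ≤ c → colCount n D c 1 = keyColLen a n c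

section keyShape

variable {a : ℕ → ℕ} {n : ℕ}

lemma keyColLen_anti {c c' : ℕ} (h : c ≤ c') : keyColLen a n c' ≤ keyColLen a n c :=
  card_le_card (monotone_filter_right _ fun _ _ hr => h.trans hr)

lemma keyColLen_le (c : ℕ) : keyColLen a n c ≤ n := by
  simpa [keyColLen] using card_filter_le (Icc 1 n) fun r => c ≤ a r

lemma le_iff_sub_keyColLen_lt (hinc : ∀ i j, 1 ≤ i → i ≤ j → j ≤ n → a i ≤ a j) {c r : ℕ}
    (h1 : 1 ≤ r) (h2 : r ≤ n) : c ≤ a r ↔ n - keyColLen a n c < r := by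
  constructor
  · intro h
    have hsub : Icc r n ⊆ {t ∈ Icc 1 n | c ≤ a t} := fun t ht => by
      rw [mem_Icc] at ht
      exact mem_filter.2 ⟨mem_Icc.2 ⟨by omega, ht.2⟩, h.trans (hinc r t h1 ht.1 ht.2)⟩
    have := card_le_card hsub
    rw [Nat.card_Icc] at this
    rw [keyColLen]; omega
  · intro h
    by_contra hcon
    have hsub : {t ∈ Icc 1 n | c ≤ a t} ⊆ Icc (r + 1) n := fun t ht => by
      rw [mem_filter, mem_Icc] at ht
      rw [mem_Icc]
      by_contra hlt
      exact hcon (ht.2.trans (hinc t r ht.1.1 (by omega) h2))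
    have := card_le_card hsub
    rw [Nat.card_Icc] at this
    rw [keyColLen] at h; omega

lemma fitsKey_keyDiagram (ha : ∀ i, n < i → a i = 0) : FitsKey a n (keyDiagram a) where
  inBox := by
    rintro ⟨c, r⟩ ⟨hc, hr, h⟩
    refine ⟨hc, hr, ?_⟩
    by_contra hrn
    have := ha r (by omega)
    simp only at h
    omega
  nested c hc s := card_le_card <| monotone_filter_right _ fun r _ ⟨_, hr, h⟩ =>
    ⟨hc, hr, by simp only at h ⊢; omega⟩
  colCount_eq c hc := by
    unfold colCount keyColLen
    congr 1
    refine filter_congr fun r hr => ?_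
    simp only [keyDiagram, Set.mem_ofPred_eq]
    exact ⟨fun h => h.2.2, fun h => ⟨hc, (mem_Icc.1 hr).1, h⟩⟩

end keyShape

section kohnertDiagrams

variable {a : ℕ → ℕ} {n : ℕ}

lemma FitsKey.kohnertMove {T S : Diagram} (hT : FitsKey a n T) (hM : KohnertMove T S) :
    FitsKey a n S := by
  obtain ⟨c, r, r', hmem, hright, hr'1, hr'r, hnotm, hbet, rfl⟩ := hM
  obtain ⟨hc1, -, hrn⟩ : 1 ≤ c ∧ 1 ≤ r ∧ r ≤ n := hT.inBox _ hmem
  have hmove := colCount_moveCell (n := n) hmem (Or.inl hnotm) hrn (by omega) c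
  simp only [true_and] at hmove
  have hstrict : ∀ s, r' < s → s ≤ r → colCount n T (c + 1) s < colCount n T c s := by
    intro s hs1 hs2
    have hfull := colCount_eq_of_forall_mem (D := T) (c := c) (s := s) (by omega) hrn
      fun t ht1 ht2 => (eq_or_lt_of_le ht2).elim (· ▸ hmem) (hbet t (by omega))
    have hgap := colCount_le_of_notMem (D := T) (c := c + 1) hs2 hrn
      fun h => absurd (hright _ h) (by omega)
    have := hT.nested c hc1 (r + 1)
    omega
  refine ⟨?_, hT.nested.of_column (c := c) ?_ ?_ ?_, ?_⟩
  · rintro p (rfl | hp)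
    · exact ⟨hc1, hr'1, by omega⟩
    · exact hT.inBox p hp.1
  · exact fun e he => colCount_moveCell_of_ne hmem (Or.inl hnotm) hrn (by omega) he
  · intro hc s
    have := hmove s
    have := hT.nested (c - 1) (by omega) s
    rw [Nat.sub_add_cancel (by omega)] at this
    split_ifs at * <;> omega
  · intro s
    have := hmove s
    have := hT.nested c hc1 s
    have := hstrict s
    split_ifs at * <;> omega
  · intro e he
    rw [colCount_moveCell_of_le hmem (Or.inl hnotm) hrn (by omega) (by omega) hr'1]
    exact hT.colCount_eq e he

lemma FitsKey.of_mem_KD (ha : ∀ i, n < i → a i = 0) {T : Diagram} (hT : T ∈ KD a) :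
    FitsKey a n T := by
  induction hT with
  | refl => exact fitsKey_keyDiagram ha
  | tail _ hstep ih => exact ih.kohnertMove hstep

lemma FitsKey.fst_le_sup {D : Diagram} (hD : FitsKey a n D) {p : ℕ × ℕ} (hp : p ∈ D) :
    p.1 ≤ (Icc 1 n).sup a := by
  obtain ⟨h1, h2, h3⟩ := hD.inBox p hp
  have hpos : 1 ≤ keyColLen a n p.1 := hD.colCount_eq p.1 h1 ▸ one_le_colCount hp h2 h3
  obtain ⟨r, hr⟩ := card_pos.1 hpos
  rw [mem_filter] at hr
  exact hr.2.trans (le_sup hr.1)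

lemma FitsKey.finite {D : Diagram} (hD : FitsKey a n D) : D.Finite :=
  (Set.finite_Icc (1, 1) ((Icc 1 n).sup a, n)).subset fun p hp =>
    ⟨⟨(hD.inBox p hp).1, (hD.inBox p hp).2.1⟩, ⟨hD.fst_le_sup hp, (hD.inBox p hp).2.2⟩⟩

noncomputable def rowDeficit (n : ℕ) (D : Diagram) : ℕ := ∑ᶠ p ∈ D, (n - p.2)

lemma rowDeficit_insert_diff {D : Diagram} (hfin : D.Finite) {p q : ℕ × ℕ} (hq : q ∈ D)
    (hp : p ∉ D) : rowDeficit n (insert p (D \ {q})) + (n - q.2) = rowDeficit n D + (n - p.2) := by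
  unfold rowDeficit
  conv_rhs => rw [← Set.insert_sdiff_self_of_mem hq]
  rw [finsum_mem_insert _ (by simp [hp]) hfin.sdiff, finsum_mem_insert _ (by simp) hfin.sdiff]
  ring

lemma mem_of_forall_mem_succ {D : Diagram} {v : ℕ}
    (hup : ∀ c t, v < t → t < n → (c, t) ∈ D → (c, t + 1) ∈ D) {c t u : ℕ} (hm : (c, t) ∈ D)
    (hv : v < t) (htu : t ≤ u) (hun : u ≤ n) : (c, u) ∈ D := by
  induction u, htu using Nat.le_induction with
  | base => exact hm
  | succ u htu ih => exact hup c u (by omega) (by omega) (ih (by omega))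

lemma colCount_of_forall_mem_succ {D : Diagram} (hbox : InBox n D) {v : ℕ}
    (hup : ∀ c t, v < t → t < n → (c, t) ∈ D → (c, t + 1) ∈ D) {c t : ℕ} (hm : (c, t) ∈ D)
    (hv : v < t) : colCount n D c t = n + 1 - t := by
  have htn : t ≤ n := (hbox _ hm).2.2
  rw [colCount_eq_of_forall_mem (u := n) (by omega) le_rfl fun u hu1 hu2 =>
    mem_of_forall_mem_succ hup hm hv hu1 hu2, colCount_eq_zero (by omega), zero_add]

lemma FitsKey.eq_keyDiagram (hinc : ∀ i j, 1 ≤ i → i ≤ j → j ≤ n → a i ≤ a j)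
    (ha : ∀ i, n < i → a i = 0) {D : Diagram} (hD : FitsKey a n D)
    (hup : ∀ c t, 0 < t → t < n → (c, t) ∈ D → (c, t + 1) ∈ D) : D = keyDiagram a := by
  ext ⟨c, r⟩
  have hkey : (c, r) ∈ keyDiagram a ↔ 1 ≤ c ∧ 1 ≤ r ∧ r ≤ n ∧ n - keyColLen a n c < r := by
    simp only [keyDiagram, Set.mem_ofPred_eq]
    constructor
    · rintro ⟨h1, h2, h3⟩
      have h4 : r ≤ n := by
        by_contra hcon
        have := ha r (by omega)
        omega
      exact ⟨h1, h2, h4, (le_iff_sub_keyColLen_lt hinc h2 h4).1 h3⟩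
    · rintro ⟨h1, h2, h3, h4⟩
      exact ⟨h1, h2, (le_iff_sub_keyColLen_lt hinc h2 h3).2 h4⟩
  rw [hkey]
  constructor
  · intro hm
    obtain ⟨h1, h2, h3⟩ : 1 ≤ c ∧ 1 ≤ r ∧ r ≤ n := hD.inBox _ hm
    refine ⟨h1, h2, h3, ?_⟩
    have := colCount_of_forall_mem_succ hD.inBox hup hm (by omega)
    have := colCount_anti (n := n) (D := D) (c := c) h2
    have := hD.colCount_eq c h1
    omega
  · rintro ⟨h1, h2, h3, h4⟩
    by_contra hno
    have := colCount_eq_of_forall_notMem (n := n) (D := D) (c := c) (s := 1) (t := r + 1) (by omega)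
      (by omega) fun t ht1 ht2 hmem =>
        hno (mem_of_forall_mem_succ hup hmem (by omega) (Nat.le_of_lt_succ ht2) h3)
    have := colCount_le (n := n) (D := D) (c := c) (s := r + 1)
    have := hD.colCount_eq c h1
    omega

/-- `(c₀, v)` is the cell raised when undoing a Kohnert move: `v` is the highest row containing a
cell whose upper neighbour is empty, and `c₀` is the leftmost such cell in row `v`. -/
structure LiftSite (n : ℕ) (D : Diagram) (c₀ v : ℕ) : Prop where
  lt : v < n
  mem : (c₀, v) ∈ D
  notMem_succ : (c₀, v + 1) ∉ D
  mem_succ : ∀ c t, v < t → t < n → (c, t) ∈ D → (c, t + 1) ∈ D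
  le_of_gap : ∀ e, (e, v) ∈ D → (e, v + 1) ∉ D → c₀ ≤ e

section liftSite

variable {D : Diagram} {c₀ v : ℕ}

lemma LiftSite.colCount_succ (hL : LiftSite n D c₀ v) (hD : InBox n D) {c : ℕ}
    (h : (c, v + 1) ∈ D) : colCount n D c (v + 1) = n - v := by
  rw [colCount_of_forall_mem_succ hD hL.mem_succ h (by omega)]
  omega

lemma LiftSite.colCount_lt (hL : LiftSite n D c₀ v) : colCount n D c₀ (v + 1) < n - v := by
  have hvn := hL.lt
  have := colCount_le_of_notMem (n := n) (D := D) (s := v + 1) le_rfl (by omega) hL.notMem_succ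
  have := colCount_le (n := n) (D := D) (c := c₀) (s := v + 1 + 1)
  omega

lemma LiftSite.le_of_mem_succ (hL : LiftSite n D c₀ v) (hD : FitsKey a n D) {e : ℕ}
    (he : (e, v + 1) ∈ D) : e ≤ c₀ := by
  by_contra hlt
  have hc₀ : 1 ≤ c₀ := (hD.inBox _ hL.mem).1
  have := hD.nested.anti hc₀ (le_of_not_ge hlt) (v + 1)
  have := hL.colCount_succ hD.inBox he
  have := hL.colCount_lt
  omega

lemma LiftSite.colCount_lt_pred (hL : LiftSite n D c₀ v) (hD : FitsKey a n D) (hc₀ : 2 ≤ c₀) :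
    colCount n D c₀ (v + 1) < colCount n D (c₀ - 1) (v + 1) := by
  have hnest := hD.nested (c₀ - 1) (by omega)
  rw [Nat.sub_add_cancel (by omega)] at hnest
  have hvn := hL.lt
  by_contra hge
  have hmv : (c₀ - 1, v) ∈ D := by
    by_contra hno
    have := colCount_eq_ite_add (n := n) (D := D) (c := c₀) (s := v) (by omega)
    have := colCount_eq_ite_add (n := n) (D := D) (c := c₀ - 1) (s := v) (by omega)
    have := hnest v
    simp only [hL.mem, hno, if_true, if_false] at *
    omega
  have hnmv : (c₀ - 1, v + 1) ∉ D := fun h => by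
    have := hL.colCount_succ hD.inBox h
    have := hL.colCount_lt
    omega
  have := hL.le_of_gap _ hmv hnmv
  omega

lemma LiftSite.fitsKey (hL : LiftSite n D c₀ v) (hD : FitsKey a n D) :
    FitsKey a n (insert (c₀, v + 1) (D \ {(c₀, v)})) := by
  obtain ⟨hc1, hv1, -⟩ : 1 ≤ c₀ ∧ 1 ≤ v ∧ v ≤ n := hD.inBox _ hL.mem
  have hvn := hL.lt
  have hmove := colCount_moveCell (n := n) hL.mem (Or.inl hL.notMem_succ) (by omega) hvn c₀
  simp only [true_and] at hmove
  refine ⟨?_, hD.nested.of_column (c := c₀) ?_ ?_ ?_, fun e he => ?_⟩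
  · rintro p (rfl | hp)
    · exact ⟨hc1, by omega, hvn⟩
    · exact hD.inBox p hp.1
  · exact fun e he => colCount_moveCell_of_ne hL.mem (Or.inl hL.notMem_succ) (by omega) hvn he
  · intro hc2 s
    have := hmove s
    have := hD.nested (c₀ - 1) (by omega) s
    rw [Nat.sub_add_cancel (by omega)] at this
    have := hL.colCount_lt_pred hD hc2
    by_cases hs : s = v + 1
    · subst hs; simp only [le_refl, if_true] at *; split_ifs at * <;> omega
    · split_ifs at * <;> omega
  · intro s
    have := hmove s
    have := hD.nested c₀ hc1 s
    split_ifs at * <;> omega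
  · rw [colCount_moveCell_of_le hL.mem (Or.inl hL.notMem_succ) (by omega) hvn hv1 (by omega)]
    exact hD.colCount_eq e he

lemma LiftSite.kohnertMove (hL : LiftSite n D c₀ v) (hD : FitsKey a n D) :
    KohnertMove (insert (c₀, v + 1) (D \ {(c₀, v)})) D := by
  refine ⟨c₀, v + 1, v, Set.mem_insert _ _, ?_, (hD.inBox _ hL.mem).2.1, by omega, by simp,
    by omega, (insert_moveCell_diff hL.mem (Or.inl hL.notMem_succ)).symm⟩
  rintro c' (h | h)
  · exact (Prod.mk.inj h).1.le
  · exact hL.le_of_mem_succ hD h.1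

end liftSite

lemma FitsKey.exists_kohnertMove (hinc : ∀ i j, 1 ≤ i → i ≤ j → j ≤ n → a i ≤ a j)
    (ha : ∀ i, n < i → a i = 0) {D : Diagram} (hD : FitsKey a n D) (hne : D ≠ keyDiagram a) :
    ∃ D', FitsKey a n D' ∧ KohnertMove D' D ∧ rowDeficit n D' + 1 = rowDeficit n D := by
  let P : ℕ → Prop := fun v => v < n ∧ ∃ c, (c, v) ∈ D ∧ (c, v + 1) ∉ D
  obtain ⟨v₀, hv₀⟩ : ∃ v, P v := by
    by_contra h
    refine hne (hD.eq_keyDiagram hinc ha fun c t _ htn hm => ?_)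
    by_contra h'
    exact h ⟨t, htn, c, hm, h'⟩
  obtain ⟨hvn, hex⟩ : P (Nat.findGreatest P n) := Nat.findGreatest_spec hv₀.1.le hv₀
  obtain ⟨hm, hnm⟩ := Nat.find_spec hex
  have hup : ∀ c t, Nat.findGreatest P n < t → t < n → (c, t) ∈ D → (c, t + 1) ∈ D :=
    fun c t hvt htn hm => by
      by_contra h
      exact (Nat.le_findGreatest htn.le ⟨htn, c, hm, h⟩).not_gt hvt
  have hL : LiftSite n D (Nat.find hex) (Nat.findGreatest P n) :=
    ⟨hvn, hm, hnm, hup, fun e he he' => Nat.find_min' hex ⟨he, he'⟩⟩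
  refine ⟨_, hL.fitsKey hD, hL.kohnertMove hD, ?_⟩
  have := rowDeficit_insert_diff (n := n) hD.finite hm hnm
  simp only at this
  omega

lemma FitsKey.mem_KD (hinc : ∀ i j, 1 ≤ i → i ≤ j → j ≤ n → a i ≤ a j)
    (ha : ∀ i, n < i → a i = 0) {D : Diagram} (hD : FitsKey a n D) : D ∈ KD a := by
  induction h : rowDeficit n D using Nat.strong_induction_on generalizing D with
  | _ k ih =>
    by_cases hkey : D = keyDiagram a
    · exact hkey ▸ Relation.ReflTransGen.refl
    · obtain ⟨D', hD', hmove, hdef⟩ := hD.exists_kohnertMove hinc ha hkey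
      exact Relation.ReflTransGen.tail (ih _ (by omega) hD' rfl) hmove

end kohnertDiagrams

section rowWeight

variable {D : Diagram} {p q : ℕ × ℕ}

lemma rowWeight_insert (hfin : D.Finite) (hp : p ∉ D) (i : ℕ) :
    rowWeight (insert p D) i = rowWeight D i + if p.2 = i then 1 else 0 := by
  unfold rowWeight
  split_ifs with h
  · rw [show {x | x ∈ insert p D ∧ x.2 = i} = insert p {x | x ∈ D ∧ x.2 = i} by
      ext x; simp only [Set.mem_insert_iff, Set.mem_ofPred_eq]; aesop]
    exact Set.ncard_insert_of_notMem (fun h' => hp h'.1) (hfin.subset fun x hx => hx.1)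
  · rw [add_zero]
    congr 1
    ext x
    simp only [Set.mem_insert_iff, Set.mem_ofPred_eq]
    aesop

lemma rowWeight_moveCell (hfin : D.Finite) (hq : q ∈ D) (hp : p ∉ D ∨ p = q) (i : ℕ) :
    rowWeight (insert p (D \ {q})) i + (if q.2 = i then 1 else 0) =
      rowWeight D i + if p.2 = i then 1 else 0 := by
  rcases hp with hp | rfl
  · conv_rhs => rw [← Set.insert_sdiff_self_of_mem hq]
    rw [rowWeight_insert hfin.sdiff (by simp [hp]), rowWeight_insert hfin.sdiff (by simp)]
    ring
  · rw [Set.insert_sdiff_self_of_mem hq]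

lemma rowWeight_singleton (p : ℕ × ℕ) (i : ℕ) :
    rowWeight {p} i = if p.2 = i then 1 else 0 := by
  simpa [rowWeight] using rowWeight_insert (D := ∅) Set.finite_empty (p := p) (by simp) i

end rowWeight

/-- Schensted column insertion of the entry `n + 1 - ρ` into column `c`, read through
`toDiagram`. -/
noncomputable def colInsert : ℕ → Diagram → ℕ → ℕ → Diagram
  | 0, D, c, ρ => insert (c, ρ) D
  | fuel + 1, D, c, ρ =>
    if h : {s ∈ Icc 1 ρ | (c, s) ∈ D}.Nonempty then
      let ρ' := {s ∈ Icc 1 ρ | (c, s) ∈ D}.max' h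
      colInsert fuel (insert (c, ρ) (D \ {(c, ρ')})) (c + 1) ρ'
    else insert (c, ρ) D

/-- Reverse bumping through the columns `c, c - 1, …, 1`; returns the diagram and the row that
leaves column `1`. -/
noncomputable def colUninsert (n : ℕ) : ℕ → Diagram → ℕ → Diagram × ℕ
  | 0, D, ρ => (D, ρ)
  | c + 1, D, ρ =>
    if h : {s ∈ Icc ρ n | (c + 1, s) ∈ D}.Nonempty then
      let ρ' := {s ∈ Icc ρ n | (c + 1, s) ∈ D}.min' h
      colUninsert n c (insert (c + 1, ρ) (D \ {(c + 1, ρ')})) ρ'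
    else (D, ρ)

section colInsert

variable {n : ℕ} {D : Diagram} {c ρ : ℕ}

lemma colInsert_of_forall_notMem (fuel : ℕ) (h : ∀ s, 1 ≤ s → s ≤ ρ → (c, s) ∉ D) :
    colInsert fuel D c ρ = insert (c, ρ) D := by
  cases fuel with
  | zero => rfl
  | succ fuel =>
    rw [colInsert, dif_neg]
    rintro ⟨s, hs⟩
    rw [mem_filter, mem_Icc] at hs
    exact h s hs.1.1 hs.1.2 hs.2

lemma colInsert_succ {ρ' : ℕ} (fuel : ℕ) (h1 : 1 ≤ ρ') (h2 : ρ' ≤ ρ) (hm : (c, ρ') ∈ D)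
    (hmax : ∀ x, 1 ≤ x → x ≤ ρ → (c, x) ∈ D → x ≤ ρ') :
    colInsert (fuel + 1) D c ρ = colInsert fuel (insert (c, ρ) (D \ {(c, ρ')})) (c + 1) ρ' := by
  have hmem : ρ' ∈ {s ∈ Icc 1 ρ | (c, s) ∈ D} := mem_filter.2 ⟨mem_Icc.2 ⟨h1, h2⟩, hm⟩
  have hval : {s ∈ Icc 1 ρ | (c, s) ∈ D}.max' ⟨ρ', hmem⟩ = ρ' :=
    le_antisymm (max'_le _ _ _ fun x hx => hmax x (mem_Icc.1 (mem_filter.1 hx).1).1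
      (mem_Icc.1 (mem_filter.1 hx).1).2 (mem_filter.1 hx).2) (le_max' _ _ hmem)
  rw [colInsert, dif_pos ⟨ρ', hmem⟩, hval]

lemma colUninsert_succ {ρ' : ℕ} (h1 : ρ ≤ ρ') (h2 : ρ' ≤ n) (hm : (c + 1, ρ') ∈ D)
    (hmin : ∀ x, ρ ≤ x → (c + 1, x) ∈ D → ρ' ≤ x) :
    colUninsert n (c + 1) D ρ =
      colUninsert n c (insert (c + 1, ρ) (D \ {(c + 1, ρ')})) ρ' := by
  have hmem : ρ' ∈ {s ∈ Icc ρ n | (c + 1, s) ∈ D} := mem_filter.2 ⟨mem_Icc.2 ⟨h1, h2⟩, hm⟩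
  have hval : {s ∈ Icc ρ n | (c + 1, s) ∈ D}.min' ⟨ρ', hmem⟩ = ρ' :=
    le_antisymm (min'_le _ _ hmem) (le_min' _ _ _ fun x hx => hmin x
      (mem_Icc.1 (mem_filter.1 hx).1).1 (mem_filter.1 hx).2)
  rw [colUninsert, dif_pos ⟨ρ', hmem⟩, hval]

lemma exists_highest_of_mem {s : ℕ} (hs : 1 ≤ s) (hsρ : s ≤ ρ) (hm : (c, s) ∈ D) :
    ∃ t, 1 ≤ t ∧ t ≤ ρ ∧ (c, t) ∈ D ∧ ∀ x, 1 ≤ x → x ≤ ρ → (c, x) ∈ D → x ≤ t := by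
  let P : ℕ → Prop := fun t => 1 ≤ t ∧ (c, t) ∈ D
  obtain ⟨ht1, htm⟩ : P (Nat.findGreatest P ρ) := Nat.findGreatest_spec hsρ ⟨hs, hm⟩
  exact ⟨_, ht1, Nat.findGreatest_le ρ, htm, fun x hx1 hx hxm => Nat.le_findGreatest hx ⟨hx1, hxm⟩⟩

lemma colUninsert_moveCell_up {ρ' : ℕ} (hc : 1 ≤ c) (h1 : 1 ≤ ρ') (h2 : ρ' ≤ ρ) (hρn : ρ ≤ n)
    (hm : (c, ρ') ∈ D) (hp : (c, ρ) ∉ D ∨ ρ = ρ')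
    (hmax : ∀ x, 1 ≤ x → x ≤ ρ → (c, x) ∈ D → x ≤ ρ') :
    colUninsert n c (insert (c, ρ) (D \ {(c, ρ')})) ρ' = colUninsert n (c - 1) D ρ := by
  obtain ⟨k, rfl⟩ : ∃ k, c = k + 1 := ⟨c - 1, by omega⟩
  rw [colUninsert_succ h2 hρn (Set.mem_insert _ _), insert_moveCell_diff hm hp, Nat.add_sub_cancel]
  rintro x hx (h | ⟨hxm, hne⟩)
  · exact (Prod.mk.inj h).2.ge
  · by_contra hlt
    have := hmax x (by omega) (by omega) hxm
    exact hne (by rw [show x = ρ' by omega]; rfl)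

lemma colInsert_moveCell_down {ρ' : ℕ} (fuel : ℕ) (h1 : 1 ≤ ρ) (h2 : ρ ≤ ρ')
    (hm : (c, ρ') ∈ D) (hp : (c, ρ) ∉ D ∨ ρ = ρ')
    (hmin : ∀ x, ρ ≤ x → (c, x) ∈ D → ρ' ≤ x) :
    colInsert (fuel + 1) (insert (c, ρ) (D \ {(c, ρ')})) c ρ' = colInsert fuel D (c + 1) ρ := by
  rw [colInsert_succ fuel h1 h2 (Set.mem_insert _ _), insert_moveCell_diff hm hp]
  rintro x - hx (h | ⟨hxm, hne⟩)
  · exact (Prod.mk.inj h).2.le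
  · by_contra hlt
    have := hmin x (by omega) hxm
    exact hne (by rw [show x = ρ' by omega]; rfl)

end colInsert

/-- The invariant of column insertion when a cell in row `ρ` is about to enter column `c`. -/
structure InsertState (n : ℕ) (D : Diagram) (c ρ : ℕ) : Prop where
  inBox : InBox n D
  nested : ColsNested n D
  finite : D.Finite
  one_le_col : 1 ≤ c
  one_le_row : 1 ≤ ρ
  row_le : ρ ≤ n
  lt_prev : 2 ≤ c → colCount n D c (ρ + 1) < colCount n D (c - 1) ρ

/-- What column insertion of row `ρ` into column `c` of `D` achieves: the output `R` has one
more cell, in column `c'`, whose lowest cell `(c', ρ')` starts the inverse procedure. -/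
structure InsertResult (n : ℕ) (D R : Diagram) (c ρ c' ρ' : ℕ) : Prop where
  le_col : c ≤ c'
  inBox : InBox n R
  nested : ColsNested n R
  colCount_eq : ∀ e, colCount n R e 1 = colCount n D e 1 + if e = c' then 1 else 0
  grows : colCount n D c' 1 < if c' = 1 then n else colCount n D (c' - 1) 1
  rowWeight_eq : ∀ i, rowWeight R i = rowWeight D i + if i = ρ then 1 else 0
  mem : (c', ρ') ∈ R
  le_of_mem : ∀ s, (c', s) ∈ R → ρ' ≤ s
  uninsert_eq : colUninsert n (c' - 1) (R \ {(c', ρ')}) ρ' = colUninsert n (c - 1) D ρ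

section insertState

variable {n : ℕ} {D : Diagram} {c ρ : ℕ}

lemma InsertState.bump {ρ' : ℕ} (hS : InsertState n D c ρ) (h1 : 1 ≤ ρ') (h2 : ρ' ≤ ρ)
    (hm : (c, ρ') ∈ D) (hp : (c, ρ) ∉ D ∨ ρ = ρ')
    (hmax : ∀ x, 1 ≤ x → x ≤ ρ → (c, x) ∈ D → x ≤ ρ') :
    InsertState n (insert (c, ρ) (D \ {(c, ρ')})) (c + 1) ρ' := by
  have hρn := hS.row_le
  have hmove := colCount_moveCell (n := n) hm hp (by omega) hρn c
  simp only [true_and] at hmove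
  have hgap : ∀ s, ρ' < s → s ≤ ρ + 1 → colCount n D c s = colCount n D c (ρ + 1) :=
    fun s hs1 hs2 => colCount_eq_of_forall_notMem hs2 (by omega) fun t ht1 ht2 htm => by
      have := hmax t (by omega) (by omega) htm
      omega
  refine ⟨?_, hS.nested.of_column (c := c) ?_ ?_ ?_, hS.finite.sdiff.insert _, by omega, h1,
    by omega, fun _ => ?_⟩
  · rintro p (rfl | hp)
    · exact ⟨hS.one_le_col, hS.one_le_row, hρn⟩
    · exact hS.inBox p hp.1
  · exact fun e he => colCount_moveCell_of_ne hm hp (by omega) hρn he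
  · intro hc s
    have := hmove s
    have := hS.nested (c - 1) (by omega) s
    rw [Nat.sub_add_cancel (by omega)] at this
    by_cases hs : ρ' < s ∧ s ≤ ρ
    · have := hgap s hs.1 (by omega)
      have := hS.lt_prev hc
      have := colCount_anti (n := n) (D := D) (c := c - 1) hs.2
      split_ifs at * <;> omega
    · split_ifs at * <;> omega
  · intro s
    have := hmove s
    have := hS.nested c hS.one_le_col s
    split_ifs at * <;> omega
  · rw [Nat.add_sub_cancel, colCount_moveCell_of_ne hm hp (by omega) hρn (by omega),
      colCount_moveCell_of_le hm hp (by omega) hρn le_rfl h2]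
    have := hS.nested c hS.one_le_col (ρ' + 1)
    have := colCount_eq_ite_add (n := n) (D := D) (c := c) (by omega : ρ' ≤ n)
    simp only [hm, if_true] at this
    omega

lemma InsertState.insertResult_insert (hS : InsertState n D c ρ)
    (hempty : ∀ s, 1 ≤ s → s ≤ ρ → (c, s) ∉ D) :
    InsertResult n D (insert (c, ρ) D) c ρ c ρ := by
  have hρn := hS.row_le
  have hnm : (c, ρ) ∉ D := hempty ρ hS.one_le_row le_rfl
  have hins := colCount_insert (n := n) hρn hnm
  have hgap : ∀ s, s ≤ ρ + 1 → colCount n D c s = colCount n D c (ρ + 1) :=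
    fun s hs => colCount_eq_of_forall_notMem hs (by omega) fun t ht1 ht2 htm =>
      hempty t (hS.inBox _ htm).2.1 (by omega) htm
  refine
    { le_col := le_rfl
      inBox := ?_
      nested := hS.nested.of_column (c := c) (fun e he s => by simp [hins, he]) ?_ fun s => ?_
      colCount_eq := fun e => by simp only [hins, hS.one_le_row, and_true]
      grows := ?_
      rowWeight_eq := fun i => by simp only [rowWeight_insert hS.finite hnm, eq_comm]
      mem := Set.mem_insert _ _
      le_of_mem := ?_
      uninsert_eq := by rw [Set.insert_sdiff_self_of_notMem hnm] }
  · rintro p (rfl | hp)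
    · exact ⟨hS.one_le_col, hS.one_le_row, hρn⟩
    · exact hS.inBox p hp
  · intro hc s
    rw [hins]
    have := hS.lt_prev hc
    by_cases hs : s ≤ ρ
    · have := hgap s (by omega)
      have := colCount_anti (n := n) (D := D) (c := c - 1) hs
      simp only [true_and, hs, if_true]
      omega
    · have := hS.nested (c - 1) (by omega) s
      rw [Nat.sub_add_cancel (by omega)] at this
      simp only [true_and, hs, if_false]
      omega
  · rw [hins]
    have := hS.nested c hS.one_le_col s
    omega
  · have := hgap 1 (by omega)
    have := hS.one_le_row
    have := hS.one_le_col
    split_ifs with hc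
    · have := colCount_le (n := n) (D := D) (c := c) (s := ρ + 1)
      omega
    · have := hS.lt_prev (by omega)
      have := colCount_anti (n := n) (D := D) (c := c - 1) hS.one_le_row
      omega
  · rintro s (h | h)
    · exact (Prod.mk.inj h).2.ge
    · by_contra hlt
      exact hempty s (hS.inBox _ h).2.1 (by omega) h

theorem InsertState.exists_insertResult (fuel : ℕ) (hS : InsertState n D c ρ)
    (hfuel : ∀ p ∈ D, p.1 < c + fuel) :
    ∃ c' ρ', InsertResult n D (colInsert fuel D c ρ) c ρ c' ρ' := by
  induction fuel generalizing D c ρ with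
  | zero =>
    have hempty : ∀ s, 1 ≤ s → s ≤ ρ → (c, s) ∉ D := fun s _ _ hm => by
      have := hfuel _ hm
      simp at this
    exact ⟨c, ρ, hS.insertResult_insert hempty⟩
  | succ fuel ih =>
    by_cases hex : ∃ s, 1 ≤ s ∧ s ≤ ρ ∧ (c, s) ∈ D
    · obtain ⟨s, hs1, hsρ, hsm⟩ := hex
      obtain ⟨ρ', h1, h2, hm, hmax⟩ := exists_highest_of_mem hs1 hsρ hsm
      have hρn := hS.row_le
      have hp : (c, ρ) ∉ D ∨ ρ = ρ' :=
        or_iff_not_imp_left.2 fun h => le_antisymm (hmax ρ hS.one_le_row le_rfl (not_not.1 h)) h2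
      rw [colInsert_succ fuel h1 h2 hm hmax]
      obtain ⟨c', ρ'', hR⟩ := ih (hS.bump h1 h2 hm hp hmax) fun p hp' => by
        rcases hp' with rfl | hp'
        · omega
        · have := hfuel p hp'.1
          omega
      have hcount : ∀ e, colCount n (insert (c, ρ) (D \ {(c, ρ')})) e 1 = colCount n D e 1 :=
        colCount_moveCell_of_le hm hp (by omega) hρn h1 hS.one_le_row
      refine ⟨c', ρ'',
        { le_col := by have := hR.le_col; omega
          inBox := hR.inBox
          nested := hR.nested
          colCount_eq := fun e => by rw [hR.colCount_eq, hcount]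
          grows := by simpa only [hcount] using hR.grows
          rowWeight_eq := fun i => ?_
          mem := hR.mem
          le_of_mem := hR.le_of_mem
          uninsert_eq := by
            rw [hR.uninsert_eq, Nat.add_sub_cancel,
              colUninsert_moveCell_up hS.one_le_col h1 h2 hρn hm hp hmax] }⟩
      have := rowWeight_moveCell hS.finite hm (hp.imp_right (congrArg _)) i
      rw [hR.rowWeight_eq]
      simp only at this
      split_ifs at * <;> omega
    · have hempty : ∀ s, 1 ≤ s → s ≤ ρ → (c, s) ∉ D := fun s h1 h2 hm => hex ⟨s, h1, h2, hm⟩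
      rw [colInsert_of_forall_notMem _ hempty]
      exact ⟨c, ρ, hS.insertResult_insert hempty⟩

end insertState

/-- The invariant of `colUninsert` when row `ρ` is about to be pushed back into column `c`. -/
structure UninsertState (n : ℕ) (D : Diagram) (c ρ : ℕ) : Prop where
  inBox : InBox n D
  nested : ColsNested n D
  one_le_row : 1 ≤ ρ
  row_le : ρ ≤ n
  colCount_pos : 1 ≤ c → 0 < colCount n D c ρ
  lt_colCount : 1 ≤ c → ∀ s, ρ < s → colCount n D (c + 1) s < colCount n D c ρ

section uninsertState

variable {n : ℕ} {D : Diagram} {c ρ : ℕ}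

lemma UninsertState.unbump {ρ' : ℕ} (hS : UninsertState n D (c + 1) ρ) (h1 : ρ ≤ ρ')
    (h2 : ρ' ≤ n) (hm : (c + 1, ρ') ∈ D) (hp : (c + 1, ρ) ∉ D ∨ ρ = ρ')
    (hmin : ∀ x, ρ ≤ x → (c + 1, x) ∈ D → ρ' ≤ x) :
    UninsertState n (insert (c + 1, ρ) (D \ {(c + 1, ρ')})) c ρ' := by
  have hρ1 := hS.one_le_row
  have hmove := colCount_moveCell (n := n) hm hp h2 (by omega) (c + 1)
  simp only [true_and] at hmove
  have hgap : ∀ s, ρ ≤ s → s ≤ ρ' → colCount n D (c + 1) s = colCount n D (c + 1) ρ :=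
    fun s hs1 hs2 => by
      have hgap := fun s (hs1 : ρ ≤ s) (hs2 : s ≤ ρ') =>
        colCount_eq_of_forall_notMem (n := n) (D := D) (c := c + 1) hs2 (by omega)
          fun t ht1 ht2 htm => absurd (hmin t (by omega) htm) (by omega)
      rw [hgap s hs1 hs2, hgap ρ le_rfl h1]
  have hoff := fun e (he : e ≠ c + 1) => colCount_moveCell_of_ne hm hp h2 (by omega) he
  have hc1 : 1 ≤ c + 1 := by omega
  have hlow : 1 ≤ colCount n D (c + 1) ρ' := one_le_colCount hm le_rfl h2
  refine ⟨?_, hS.nested.of_column (c := c + 1) hoff ?_ ?_, by omega, h2, fun hc => ?_,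
    fun hc s hs => ?_⟩
  · rintro p (rfl | hp)
    · exact ⟨hc1, hρ1, by omega⟩
    · exact hS.inBox p hp.1
  · intro hc s
    rw [Nat.add_sub_cancel]
    have := hmove s
    have := hS.nested c (by omega) s
    split_ifs at * <;> omega
  · intro s
    have := hmove s
    have := hS.nested (c + 1) hc1 s
    by_cases hs : ρ < s ∧ s ≤ ρ'
    · have := hgap s hs.1.le hs.2
      have := hS.lt_colCount hc1 s hs.1
      split_ifs at * <;> omega
    · split_ifs at * <;> omega
  · rw [hoff c (by omega)]
    exact hlow.trans (hS.nested c hc ρ')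
  · have h3 := hmove s
    rw [hoff c (by omega)]
    have := hS.nested c hc ρ'
    have := colCount_anti (n := n) (D := D) (c := c + 1) (show ρ' + 1 ≤ s by omega)
    have := colCount_eq_ite_add (n := n) (D := D) (c := c + 1) h2
    simp only [hm, if_true] at this
    split_ifs at h3 <;> omega

theorem UninsertState.exists_colInsert_eq (hS : UninsertState n D c ρ) :
    ∃ D₀ r, UninsertState n D₀ 0 r ∧
      (∀ e, colCount n D₀ e 1 = colCount n D e 1) ∧
      ∀ fuel, colInsert (fuel + c) D₀ 1 r = colInsert fuel D (c + 1) ρ := by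
  induction c generalizing D ρ with
  | zero =>
    exact ⟨D, ρ, ⟨hS.inBox, hS.nested, hS.one_le_row, hS.row_le, by simp, by simp⟩,
      fun _ => rfl, fun _ => rfl⟩
  | succ c ih =>
    obtain ⟨ρ', h1, h2, hm, hmin⟩ :=
      exists_lowest_of_one_le_colCount (hS.colCount_pos (by omega))
    have hp : (c + 1, ρ) ∉ D ∨ ρ = ρ' :=
      or_iff_not_imp_left.2 fun h => le_antisymm h1 (hmin ρ le_rfl (not_not.1 h))
    obtain ⟨D₀, r, hS₀, hcount, hins⟩ := ih (hS.unbump h1 h2 hm hp hmin)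
    refine ⟨D₀, r, hS₀, fun e => ?_, fun fuel => ?_⟩
    · rw [hcount,
        colCount_moveCell_of_le hm hp h2 hS.row_le (hS.one_le_row.trans h1) hS.one_le_row]
    · rw [show fuel + (c + 1) = fuel + 1 + c by omega, hins (fuel + 1),
        colInsert_moveCell_down fuel hS.one_le_row h1 hm hp hmin]

end uninsertState

section corners

variable {a : ℕ → ℕ} {n : ℕ}

lemma keyColLen_add_eComp {j : ℕ} (hj1 : 1 ≤ j) (hjn : j ≤ n) (e : ℕ) :
    keyColLen (a + eComp j) n e = keyColLen a n e + if e = a j + 1 then 1 else 0 := by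
  unfold keyColLen
  split_ifs with he
  · subst he
    rw [← card_insert_of_notMem (s := {r ∈ Icc 1 n | a j + 1 ≤ a r}) (a := j) (by simp)]
    congr 1
    ext r
    by_cases hr : r = j
    · subst hr; simp [eComp, hj1, hjn]
    · simp [eComp, hr]
  · rw [add_zero]
    congr 1
    refine filter_congr fun r _ => ?_
    simp only [Pi.add_apply, eComp]
    split_ifs with hr
    · subst hr; omega
    · rw [add_zero]

lemma add_eComp_eq_zero (ha : ∀ i, n < i → a i = 0) {j : ℕ} (hjn : j ≤ n) :
    ∀ i, n < i → (a + eComp j) i = 0 := fun i hi => by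
  simp [eComp, ha i hi, show i ≠ j by omega]

lemma add_eComp_mono (hinc : ∀ i j, 1 ≤ i → i ≤ j → j ≤ n → a i ≤ a j) {j : ℕ}
    (hj : j = n ∨ a j < a (j + 1)) :
    ∀ i i', 1 ≤ i → i ≤ i' → i' ≤ n → (a + eComp j) i ≤ (a + eComp j) i' := by
  intro i i' h1 h2 h3
  have := hinc i i' h1 h2 h3
  simp only [Pi.add_apply, eComp]
  split_ifs with hi hi' hi' <;> try omega
  subst hi
  rcases hj with hj | hj
  · omega
  · have := hinc (i + 1) i' (by omega) (by omega) h3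
    omega

lemma lt_of_corner (hinc : ∀ i j, 1 ≤ i → i ≤ j → j ≤ n → a i ≤ a j) {j j' : ℕ}
    (hj : j = n ∨ a j < a (j + 1)) (hjj' : j < j') (hj'n : j' ≤ n) : a j < a j' := by
  rcases hj with hj | hj
  · omega
  · exact hj.trans_le (hinc _ _ (by omega) hjj' hj'n)

/-- `hgrow` says that column `c` of `key a` can take one more cell. -/
lemma exists_corner_of_keyColLen_lt (hinc : ∀ i j, 1 ≤ i → i ≤ j → j ≤ n → a i ≤ a j)
    {c : ℕ} (hc : 1 ≤ c) (hgrow : keyColLen a n c < if c = 1 then n else keyColLen a n (c - 1)) :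
    ∃ j, 1 ≤ j ∧ j ≤ n ∧ (j = n ∨ a j < a (j + 1)) ∧ a j + 1 = c := by
  have hlt : keyColLen a n c < n := by
    split_ifs at hgrow
    · exact hgrow
    · exact hgrow.trans_le (keyColLen_le _)
  have hiff := fun {r : ℕ} (h1 : 1 ≤ r) (h2 : r ≤ n) => le_iff_sub_keyColLen_lt (c := c) hinc h1 h2
  have hiff' := fun {r : ℕ} (h1 : 1 ≤ r) (h2 : r ≤ n) =>
    le_iff_sub_keyColLen_lt (c := c - 1) hinc h1 h2
  refine ⟨n - keyColLen a n c, by omega, by omega, ?_, ?_⟩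
  · by_cases h : n - keyColLen a n c = n
    · exact Or.inl h
    · have h1 := (hiff (r := n - keyColLen a n c + 1) (by omega) (by omega)).2 (by omega)
      have h2 := mt (hiff (r := n - keyColLen a n c) (by omega) (by omega)).1 (by omega)
      omega
  · have h2 := mt (hiff (r := n - keyColLen a n c) (by omega) (by omega)).1 (by omega)
    by_cases hc1 : c = 1
    · omega
    · rw [if_neg hc1] at hgrow
      have := (hiff' (r := n - keyColLen a n c) (by omega) (by omega)).2 (by omega)
      omega

end corners

lemma kohnertMove_singleton {t : ℕ} (ht : 1 ≤ t) : KohnertMove {(1, t + 1)} {(1, t)} :=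
  ⟨1, t + 1, t, rfl, fun c' h => (Prod.mk.inj h).1.le, ht, by omega, by simp, by omega,
    by simp⟩

lemma mem_KD_eComp_iff {n : ℕ} (hn : 1 ≤ n) {U : Diagram} :
    U ∈ KD (eComp n) ↔ ∃ r, 1 ≤ r ∧ r ≤ n ∧ U = {(1, r)} := by
  have hkey : keyDiagram (eComp n) = {(1, n)} := by
    ext ⟨c, r⟩
    simp only [keyDiagram, eComp, Set.mem_ofPred_eq, Set.mem_singleton_iff, Prod.mk.injEq]
    split_ifs <;> omega
  constructor
  · intro hU
    induction hU with
    | refl => exact ⟨n, hn, le_rfl, hkey⟩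
    | tail _ hmove ih =>
      obtain ⟨r, hr1, hrn, rfl⟩ := ih
      obtain ⟨c, r₀, r', hmem, -, hr'1, hr', -, -, rfl⟩ := hmove
      obtain ⟨rfl, rfl⟩ := Prod.mk.inj hmem
      exact ⟨r', hr'1, by omega, by simp⟩
  · rintro ⟨r, hr1, hrn, rfl⟩
    induction hrn using Nat.decreasingInduction with
    | self => exact hkey ▸ Relation.ReflTransGen.refl
    | of_succ t htn ih =>
      exact Relation.ReflTransGen.tail (ih (by omega)) (kohnertMove_singleton hr1)

/-- The fuel suffices since the cells of a diagram in `KD a` lie in columns `≤ max a`. -/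
noncomputable def pieriInsert (a : ℕ → ℕ) (n : ℕ) (T : Diagram) (r : ℕ) : Diagram :=
  colInsert ((Icc 1 n).sup a + 1) T 1 r

section pieri

variable {a : ℕ → ℕ} {n : ℕ}

lemma FitsKey.exists_insertResult {T : Diagram} (hT : FitsKey a n T) {r : ℕ} (hr1 : 1 ≤ r)
    (hrn : r ≤ n) : ∃ c' ρ', InsertResult n T (pieriInsert a n T r) 1 r c' ρ' :=
  InsertState.exists_insertResult _
    ⟨hT.inBox, hT.nested, hT.finite, le_rfl, hr1, hrn, fun h => absurd h (by omega)⟩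
    fun p hp => by have := hT.fst_le_sup hp; omega

lemma pieriInsert_mem (hinc : ∀ i j, 1 ≤ i → i ≤ j → j ≤ n → a i ≤ a j)
    (ha : ∀ i, n < i → a i = 0) {T : Diagram} (hT : FitsKey a n T) {r : ℕ} (hr1 : 1 ≤ r)
    (hrn : r ≤ n) :
    ∃ j, 1 ≤ j ∧ j ≤ n ∧ (j = n ∨ a j < a (j + 1)) ∧ pieriInsert a n T r ∈ KD (a + eComp j) := by
  obtain ⟨c', ρ', hR⟩ := hT.exists_insertResult hr1 hrn
  have hc' : 1 ≤ c' := hR.le_col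
  have hgrow : keyColLen a n c' < if c' = 1 then n else keyColLen a n (c' - 1) := by
    have := hR.grows
    rw [hT.colCount_eq c' hc'] at this
    split_ifs at this ⊢ with h
    · exact this
    · rwa [hT.colCount_eq (c' - 1) (by omega)] at this
  obtain ⟨j, hj1, hjn, hj, rfl⟩ := exists_corner_of_keyColLen_lt hinc hc' hgrow
  refine ⟨j, hj1, hjn, hj, FitsKey.mem_KD (add_eComp_mono hinc hj) (add_eComp_eq_zero ha hjn) ?_⟩
  exact ⟨hR.inBox, hR.nested, fun e he => by
    rw [hR.colCount_eq, hT.colCount_eq e he, keyColLen_add_eComp hj1 hjn]⟩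

lemma pieriInsert_inj {T T' : Diagram} (hT : FitsKey a n T) (hT' : FitsKey a n T')
    {r r' : ℕ} (hr1 : 1 ≤ r) (hrn : r ≤ n) (hr1' : 1 ≤ r') (hrn' : r' ≤ n)
    (h : pieriInsert a n T r = pieriInsert a n T' r') : T = T' ∧ r = r' := by
  obtain ⟨c₁, ρ₁, h₁⟩ := hT.exists_insertResult hr1 hrn
  obtain ⟨c₂, ρ₂, h₂⟩ := hT'.exists_insertResult hr1' hrn'
  rw [h] at h₁
  obtain rfl : c₁ = c₂ := by
    have e₁ := h₁.colCount_eq c₁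
    have e₂ := h₂.colCount_eq c₁
    rw [hT.colCount_eq c₁ h₁.le_col] at e₁
    rw [hT'.colCount_eq c₁ h₁.le_col] at e₂
    by_contra hne
    simp only [hne, if_true, if_false] at e₁ e₂
    omega
  obtain rfl : ρ₁ = ρ₂ := le_antisymm (h₁.le_of_mem _ h₂.mem) (h₂.le_of_mem _ h₁.mem)
  simpa [colUninsert] using h₁.uninsert_eq.symm.trans h₂.uninsert_eq

/-- Removing the lowest cell of the column `a j + 1` in which `T'` exceeds `key a` gives the
starting point of the inverse of `pieriInsert`. -/
lemma FitsKey.uninsertState_diff {j : ℕ} (hj1 : 1 ≤ j) (hjn : j ≤ n) {T' : Diagram}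
    (hT' : FitsKey (a + eComp j) n T') {ρ₀ : ℕ} (h1 : 1 ≤ ρ₀) (h2 : ρ₀ ≤ n)
    (hm : (a j + 1, ρ₀) ∈ T') (hmin : ∀ x, 1 ≤ x → (a j + 1, x) ∈ T' → ρ₀ ≤ x) :
    UninsertState n (T' \ {(a j + 1, ρ₀)}) (a j) ρ₀ := by
  have hdel := colCount_diff_singleton h2 hm
  have hoff : ∀ e, e ≠ a j + 1 → ∀ s, colCount n (T' \ {(a j + 1, ρ₀)}) e s = colCount n T' e s :=
    fun e he s => by simpa [he] using (hdel e s).symm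
  have hlow : ∀ s, s ≤ ρ₀ → colCount n T' (a j + 1) s = colCount n T' (a j + 1) 1 := by
    have hgap : ∀ s, s ≤ ρ₀ → colCount n T' (a j + 1) s = colCount n T' (a j + 1) ρ₀ :=
      fun s hs => colCount_eq_of_forall_notMem hs (by omega) fun t _ ht htm =>
        absurd (hmin t (hT'.inBox _ htm).2.1 htm) (by omega)
    intro s hs
    rw [hgap s hs, hgap 1 h1]
  have hcol := fun e he => (hT'.colCount_eq e he).trans (keyColLen_add_eComp hj1 hjn e)
  have hρ₀ := one_le_colCount (n := n) hm le_rfl h2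
  refine ⟨fun p hp => hT'.inBox p hp.1, hT'.nested.of_column (c := a j + 1) hoff ?_ ?_, h1, h2,
    fun hc => ?_, fun hc s hs => ?_⟩
  · intro _ s
    have := hdel (a j + 1) s
    have := hT'.nested (a j) (by omega) s
    simp only [Nat.add_sub_cancel]
    omega
  · intro s
    have := hdel (a j + 1) s
    by_cases hs : s ≤ ρ₀
    · have := hlow s hs
      have := hcol (a j + 1) (by omega)
      have := hcol (a j + 1 + 1) (by omega)
      have := keyColLen_anti (a := a) (n := n) (show a j + 1 ≤ a j + 1 + 1 by omega)
      have : colCount n T' (a j + 1 + 1) s ≤ colCount n T' (a j + 1 + 1) 1 := by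
        rcases Nat.eq_zero_or_pos s with rfl | hs0
        · rw [hT'.inBox.colCount_zero]
        · exact colCount_anti hs0
      simp only [hs, and_true, if_true, show a j + 1 + 1 ≠ a j + 1 by omega, if_false] at *
      omega
    · have := hT'.nested (a j + 1) (by omega) s
      simp only [hs, and_false, if_false, add_zero] at *
      omega
  · rw [hoff (a j) (by omega)]
    have := hT'.nested (a j) hc ρ₀
    omega
  · rw [hoff (a j) (by omega)]
    have := hdel (a j + 1) s
    have := hT'.nested (a j) hc ρ₀
    have := colCount_anti (n := n) (D := T') (c := a j + 1) (show ρ₀ + 1 ≤ s by omega)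
    have := colCount_eq_ite_add (n := n) (D := T') (c := a j + 1) h2
    simp only [hm, if_true, show ¬s ≤ ρ₀ by omega, and_false, if_false] at *
    omega

lemma exists_pieriInsert_eq (ha : ∀ i, n < i → a i = 0) {j : ℕ} (hj1 : 1 ≤ j) (hjn : j ≤ n)
    {T' : Diagram} (hT' : T' ∈ KD (a + eComp j)) :
    ∃ T r, FitsKey a n T ∧ 1 ≤ r ∧ r ≤ n ∧ pieriInsert a n T r = T' := by
  have hF : FitsKey (a + eComp j) n T' := .of_mem_KD (add_eComp_eq_zero ha hjn) hT'
  have hcol := fun e he => (hF.colCount_eq e he).trans (keyColLen_add_eComp hj1 hjn e)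
  obtain ⟨ρ₀, h1, h2, hm, hmin⟩ := exists_lowest_of_one_le_colCount (n := n) (D := T')
    (c := a j + 1) (s := 1) (by rw [hcol _ (by omega)]; simp)
  obtain ⟨D₀, r, hS₀, hcount, hins⟩ :=
    (hF.uninsertState_diff hj1 hjn h1 h2 hm hmin).exists_colInsert_eq
  have hD₀ : FitsKey a n D₀ := ⟨hS₀.inBox, hS₀.nested, fun e he => by
    have := colCount_diff_singleton h2 hm e 1
    rw [hcount, hcol e he] at *
    split_ifs at * <;> omega⟩
  refine ⟨D₀, r, hD₀, hS₀.one_le_row, hS₀.row_le, ?_⟩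
  have hfuel : a j ≤ (Icc 1 n).sup a := le_sup (mem_Icc.2 ⟨hj1, hjn⟩)
  rw [pieriInsert, show (Icc 1 n).sup a + 1 = (Icc 1 n).sup a + 1 - a j + a j by omega, hins,
    colInsert_of_forall_notMem, Set.insert_sdiff_self_of_mem hm]
  rintro s hs1 hsρ ⟨hsm, hne⟩
  exact hne (by rw [le_antisymm hsρ (hmin s hs1 hsm)]; rfl)

lemma rowWeight_pieriInsert {T : Diagram} (hT : FitsKey a n T) {r : ℕ} (hr1 : 1 ≤ r)
    (hrn : r ≤ n) : rowWeight (pieriInsert a n T r) = rowWeight T + rowWeight {(1, r)} := by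
  obtain ⟨c', ρ', hR⟩ := hT.exists_insertResult hr1 hrn
  funext i
  simp only [hR.rowWeight_eq, Pi.add_apply, rowWeight_singleton, eq_comm]

lemma disjoint_KD_add_eComp (hinc : ∀ i j, 1 ≤ i → i ≤ j → j ≤ n → a i ≤ a j)
    (ha : ∀ i, n < i → a i = 0) {j j' : ℕ} (hj1 : 1 ≤ j) (hjn : j ≤ n)
    (hj : j = n ∨ a j < a (j + 1)) (hj1' : 1 ≤ j') (hjn' : j' ≤ n)
    (hj' : j' = n ∨ a j' < a (j' + 1)) (hne : j ≠ j') :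
    Disjoint (KD (a + eComp j)) (KD (a + eComp j')) := by
  have haj : a j ≠ a j' := by
    rcases Nat.lt_or_gt_of_ne hne with h | h
    · exact (lt_of_corner hinc hj h hjn').ne
    · exact (lt_of_corner hinc hj' h hjn).ne'
  refine Set.disjoint_left.2 fun T hT hT' => ?_
  have h₁ := (FitsKey.of_mem_KD (add_eComp_eq_zero ha hjn) hT).colCount_eq (a j + 1) (by omega)
  have h₂ := (FitsKey.of_mem_KD (add_eComp_eq_zero ha hjn') hT').colCount_eq (a j + 1) (by omega)
  rw [keyColLen_add_eComp hj1 hjn, if_pos rfl] at h₁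
  rw [keyColLen_add_eComp hj1' hjn', if_neg (by omega)] at h₂
  omega

end pieri

noncomputable def rowInFirstCol (U : Diagram) : ℕ := sSup {r | (1, r) ∈ U}

@[simp]
lemma rowInFirstCol_singleton (r : ℕ) : rowInFirstCol {(1, r)} = r := by
  simp [rowInFirstCol]

end Kohnert

/-- For weakly increasing `a`, the target space is a disjoint
union and there is a weight-preserving bijection. -/
theorem statement7 (n : ℕ) (a : ℕ → ℕ) (hn : 1 ≤ n) (ha : ∀ i, n < i → a i = 0)
    (hinc : ∀ i j, 1 ≤ i → i ≤ j → j ≤ n → a i ≤ a j) :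
    (∃ φ : Diagram × Diagram → Diagram,
      Set.BijOn φ (KD a ×ˢ KD (eComp n))
        {T | ∃ j, 1 ≤ j ∧ j ≤ n ∧ (j = n ∨ a j < a (j + 1)) ∧ T ∈ KD (a + eComp j)} ∧
      ∀ T U : Diagram, T ∈ KD a → U ∈ KD (eComp n) →
        rowWeight (φ (T, U)) = rowWeight T + rowWeight U) ∧
    ∀ j j' : ℕ, 1 ≤ j → j ≤ n → (j = n ∨ a j < a (j + 1)) →
      1 ≤ j' → j' ≤ n → (j' = n ∨ a j' < a (j' + 1)) → j ≠ j' →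
      Disjoint (KD (a + eComp j)) (KD (a + eComp j')) := by
  have hT : ∀ {T}, T ∈ KD a → Kohnert.FitsKey a n T := Kohnert.FitsKey.of_mem_KD ha
  have hU : ∀ {U}, U ∈ KD (eComp n) ↔ ∃ r, 1 ≤ r ∧ r ≤ n ∧ U = {(1, r)} :=
    Kohnert.mem_KD_eComp_iff hn
  refine ⟨⟨fun P => Kohnert.pieriInsert a n P.1 (Kohnert.rowInFirstCol P.2), ⟨?_, ?_, ?_⟩, ?_⟩,
    fun j j' => Kohnert.disjoint_KD_add_eComp hinc ha⟩
  · rintro ⟨T, U⟩ ⟨hTa, hUe⟩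
    obtain ⟨r, hr1, hrn, rfl⟩ := hU.1 hUe
    simpa using Kohnert.pieriInsert_mem hinc ha (hT hTa) hr1 hrn
  · rintro ⟨T, U⟩ ⟨hTa, hUe⟩ ⟨T', U'⟩ ⟨hTa', hUe'⟩ h
    obtain ⟨r, hr1, hrn, rfl⟩ := hU.1 hUe
    obtain ⟨r', hr1', hrn', rfl⟩ := hU.1 hUe'
    simp only [Kohnert.rowInFirstCol_singleton] at h
    obtain ⟨rfl, rfl⟩ := Kohnert.pieriInsert_inj (hT hTa) (hT hTa') hr1 hrn hr1' hrn' h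
    rfl
  · rintro T' ⟨j, hj1, hjn, -, hT'⟩
    obtain ⟨T, r, hTa, hr1, hrn, rfl⟩ := Kohnert.exists_pieriInsert_eq ha hj1 hjn hT'
    exact ⟨(T, {(1, r)}), ⟨hTa.mem_KD hinc ha, hU.2 ⟨r, hr1, hrn, rfl⟩⟩,
      by simp⟩
  · intro T U hTa hUe
    obtain ⟨r, hr1, hrn, rfl⟩ := hU.1 hUe
    simpa using Kohnert.rowWeight_pieriInsert (hT hTa) hr1 hrn
end

section
/- Let a be a weak composition of length n. For every diagram U ∈ D(a, n), there exists a unique column index c such that cwt(U) = cwt(key_a) + e_c (that is, the column weight of U equals that of key_a increased by 1 in position c). Moreover, for every weak composition b ⪯ a and every positive integer k ≤ n such that U ∈ KD(b + e_k), one has c = b_k + 1. -/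
attribute [local instance] Classical.propDecidable

/-! Kohnert moves only move cells within their column, left swaps permute the rows of a key
diagram, and adding `e_k` to `b` adds the single cell `(b_k + 1, k)`. Hence every diagram of
`KD (b + e_k)` with `b ⪯ a` has the column weight of `key_a` plus one cell in column `b_k + 1`,
and this column is determined by the column weight alone. -/

lemma colWeight_eq_ncard (T : Diagram) (c : ℕ) : colWeight T c = {r | (c, r) ∈ T}.ncard := by
  have hcol : {p : ℕ × ℕ | p ∈ T ∧ p.1 = c} = (c, ·) '' {r | (c, r) ∈ T} := by
    ext ⟨x, y⟩
    simp only [Set.mem_ofPred_eq, Set.mem_image, Prod.mk.injEq]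
    constructor
    · rintro ⟨h, rfl⟩
      exact ⟨y, h, rfl, rfl⟩
    · rintro ⟨y, h, rfl, rfl⟩
      exact ⟨h, rfl⟩
  rw [colWeight, hcol, Set.ncard_image_of_injective _ (Prod.mk_right_injective c)]

lemma KohnertMove.colWeight_eq {T S : Diagram} (h : KohnertMove T S) :
    colWeight S = colWeight T := by
  obtain ⟨c, r, r', hr, -, -, -, hr', -, rfl⟩ := h
  funext d
  rw [colWeight_eq_ncard, colWeight_eq_ncard]
  by_cases hd : d = c
  · subst hd
    have hcol : {s | (d, s) ∈ insert (d, r') (T \ {(d, r)})}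
        = insert r' ({s | (d, s) ∈ T} \ {r}) := by
      ext s
      simp
    rw [hcol]
    exact Set.ncard_exchange (by simpa using hr') (by simpa using hr)
  · congr 1
    ext s
    simp [hd]

lemma colWeight_eq_of_mem_KD {a : ℕ → ℕ} {T : Diagram} (h : T ∈ KD a) :
    colWeight T = colWeight (keyDiagram a) := by
  induction h with
  | refl => rfl
  | tail _ hmove ih => rw [hmove.colWeight_eq, ih]

lemma LswapLE.eq_zero_of_lt {a b : ℕ → ℕ} {n : ℕ} (h : LswapLE b a)
    (ha : ∀ i, n < i → a i = 0) : ∀ i, n < i → b i = 0 := by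
  induction h with
  | refl => exact ha
  | tail _ hstep ih =>
    obtain ⟨i, j, -, hij, hlt, rfl⟩ := hstep
    intro t ht
    unfold swapParts
    split_ifs with hti htj
    · exact ih j (by omega)
    · have := ih j (by omega)
      omega
    · exact ih t ht

lemma colWeight_keyDiagram_swapParts (a : ℕ → ℕ) {i j : ℕ} (hi : 1 ≤ i) (hj : 1 ≤ j) :
    colWeight (keyDiagram (swapParts a i j)) = colWeight (keyDiagram a) := by
  funext c
  rw [colWeight_eq_ncard, colWeight_eq_ncard]
  have hrows : {r | (c, r) ∈ keyDiagram (swapParts a i j)}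
      = Equiv.swap i j ⁻¹' {r | (c, r) ∈ keyDiagram a} := by
    ext r
    simp only [keyDiagram, swapParts, Set.mem_ofPred_eq, Set.mem_preimage]
    rcases eq_or_ne r i with rfl | hri
    · simp only [Equiv.swap_apply_left, if_true]
      omega
    rcases eq_or_ne r j with rfl | hrj
    · simp only [Equiv.swap_apply_right, hri, if_true, if_false]
      omega
    · simp [Equiv.swap_apply_of_ne_of_ne hri hrj, hri, hrj]
  rw [hrows, ← Equiv.image_symm_eq_preimage,
    Set.ncard_image_of_injective _ (Equiv.swap i j).symm.injective]

lemma LswapLE.colWeight_keyDiagram_eq {a b : ℕ → ℕ} (h : LswapLE b a) :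
    colWeight (keyDiagram b) = colWeight (keyDiagram a) := by
  induction h with
  | refl => rfl
  | tail _ hstep ih =>
    obtain ⟨i, j, hi, hij, -, rfl⟩ := hstep
    rw [colWeight_keyDiagram_swapParts _ hi (by omega), ih]

lemma colWeight_keyDiagram_add_eComp {b : ℕ → ℕ} {n : ℕ} (hb : ∀ i, n < i → b i = 0)
    {k : ℕ} (hk : 1 ≤ k) :
    colWeight (keyDiagram (b + eComp k)) = colWeight (keyDiagram b) + eComp (b k + 1) := by
  funext c
  rw [Pi.add_apply, colWeight_eq_ncard, colWeight_eq_ncard]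
  by_cases hc : c = b k + 1
  · subst hc
    have hrows : {r | (b k + 1, r) ∈ keyDiagram (b + eComp k)}
        = insert k {r | (b k + 1, r) ∈ keyDiagram b} := by
      ext r
      by_cases hr : r = k <;> simp [keyDiagram, eComp, hr, hk]
    -- `Set.ncard` of an infinite set is `0`, so the bounded support of `b` is needed here.
    have hfin : {r | (b k + 1, r) ∈ keyDiagram b}.Finite :=
      (Set.finite_Iic n).subset fun r ⟨_, _, (hr : b k + 1 ≤ b r)⟩ => by
        by_contra hrn
        have := hb r (not_le.mp hrn)
        omega
    rw [hrows, Set.ncard_insert_of_notMem (by simp [keyDiagram]) hfin]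
    simp [eComp]
  · have hrows : {r | (c, r) ∈ keyDiagram (b + eComp k)} = {r | (c, r) ∈ keyDiagram b} := by
      ext r
      rcases eq_or_ne r k with rfl | hr
      · simp only [keyDiagram, eComp, Set.mem_ofPred_eq, Pi.add_apply, if_true]
        omega
      · simp [keyDiagram, eComp, hr]
    simp [hrows, eComp, hc]

lemma colWeight_of_mem_KD_add_eComp {a b : ℕ → ℕ} {n k : ℕ} (ha : ∀ i, n < i → a i = 0)
    (hba : LswapLE b a) (hk : 1 ≤ k) {U : Diagram} (hU : U ∈ KD (b + eComp k)) :
    colWeight U = colWeight (keyDiagram a) + eComp (b k + 1) := by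
  rw [colWeight_eq_of_mem_KD hU, colWeight_keyDiagram_add_eComp (hba.eq_zero_of_lt ha) hk,
    hba.colWeight_keyDiagram_eq]

lemma eComp_injective : Function.Injective eComp := by
  intro c c' h
  by_contra hne
  simpa [eComp, hne] using congrFun h c

/-- Every diagram of `D(a,n)` has a unique added column, which
is `b_k + 1` for any witnessing `b ⪯ a` and `k ≤ n`. -/
theorem statement11 (n : ℕ) (a : ℕ → ℕ) (ha : ∀ i, n < i → a i = 0)
    (U : Diagram) (hU : U ∈ Dset a n) :
    (∃! c : ℕ, colWeight U = colWeight (keyDiagram a) + eComp c) ∧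
    ∀ c : ℕ, colWeight U = colWeight (keyDiagram a) + eComp c →
      ∀ (b : ℕ → ℕ) (k : ℕ), LswapLE b a → 1 ≤ k → k ≤ n →
        U ∈ KD (b + eComp k) → c = b k + 1 := by
  have added_column_eq {c : ℕ} (hc : colWeight U = colWeight (keyDiagram a) + eComp c)
      {b : ℕ → ℕ} {k : ℕ} (hba : LswapLE b a) (hk : 1 ≤ k) (hUk : U ∈ KD (b + eComp k)) :
      c = b k + 1 :=
    eComp_injective <| add_left_cancel <|
      hc.symm.trans (colWeight_of_mem_KD_add_eComp ha hba hk hUk)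
  obtain ⟨b, j, hba, hj, -, hUj⟩ := hU
  exact ⟨⟨b j + 1, colWeight_of_mem_KD_add_eComp ha hba hj hUj,
      fun c hc => added_column_eq hc hba hj hUj⟩,
    fun c hc b' k hb'a hk _ hUk => added_column_eq hc hb'a hk hUk⟩
end
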